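/- arXiv:2109.09925 — 8 statements merged into one kernel-verified Lean document; each statement's English description precedes it below -/
import Mathlib

section
/- If A is a collection of odd-sized subsets of an n-element set such that every pair of distinct sets in A has even-sized intersection, then |A| ≤ n. -/
/-!
Over `ZMod 2`, the dot product of the characteristic vectors of `A` and `B` is `#(A ∩ B) mod 2`.
So the characteristic vectors of the sets of the family are pairwise orthogonal, but none is
orthogonal to itself; such a family is linearly independent in `(ZMod 2)ⁿ`, hence has at most
`n` members.
-/

open Finset Matrix

theorem Finset.indicator_one_dotProduct_indicator_one {ι R : Type*} [Fintype ι] [DecidableEq ι]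
    [NonAssocSemiring R] (A B : Finset ι) :
    (A : Set ι).indicator 1 ⬝ᵥ (B : Set ι).indicator (1 : ι → R) = #(A ∩ B) := by
  calc (A : Set ι).indicator 1 ⬝ᵥ (B : Set ι).indicator (1 : ι → R)
      = ∑ i, (↑(A ∩ B) : Set ι).indicator 1 i := by
        simp only [dotProduct, coe_inter, Set.inter_indicator_one, Pi.mul_apply]
    _ = #(A ∩ B) := by rw [sum_indicator_subset _ (subset_univ _)]; simp

theorem linearIndependent_indicator_one_zmod_two {ι κ : Type*} [Fintype ι] [DecidableEq ι]
    (s : κ → Finset ι) (hodd : ∀ k, Odd #(s k))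
    (heven : Pairwise fun k l => Even #(s k ∩ s l)) :
    LinearIndependent (ZMod 2) fun k => (s k : Set ι).indicator (1 : ι → ZMod 2) := by
  refine LinearMap.linearIndependent_of_isOrthoᵢ
    (B := dotProductBilin (ZMod 2) (ZMod 2)) (fun k l hkl => ?_) (fun k => ?_)
  · simp only [Function.onFun, dotProductBilin_apply_apply, indicator_one_dotProduct_indicator_one]
    exact ZMod.natCast_eq_zero_iff_even.2 (heven hkl)
  · simp only [dotProductBilin_apply_apply, indicator_one_dotProduct_indicator_one, inter_self,
      ZMod.natCast_eq_one_iff_odd.2 (hodd k)]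
    exact one_ne_zero

theorem card_le_of_odd_card_of_even_card_inter {ι : Type*} [Fintype ι] [DecidableEq ι]
    (𝒜 : Finset (Finset ι)) (hodd : ∀ A ∈ 𝒜, Odd #A)
    (heven : ∀ A ∈ 𝒜, ∀ B ∈ 𝒜, A ≠ B → Even #(A ∩ B)) :
    #𝒜 ≤ Fintype.card ι := by
  have hli := linearIndependent_indicator_one_zmod_two (fun A : 𝒜 => (A : Finset ι))
    (fun A => hodd A A.2) fun A B hAB => heven A A.2 B B.2 (Subtype.coe_ne_coe.2 hAB)
  simpa using hli.fintype_card_le_finrank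

/-- Oddtown theorem: a family of odd-sized subsets of an `n`-element set with
pairwise even-sized intersections has at most `n` members. -/
theorem oddtown (n : ℕ) (𝒜 : Finset (Finset (Fin n)))
    (hodd : ∀ A ∈ 𝒜, Odd A.card)
    (heven : ∀ A ∈ 𝒜, ∀ B ∈ 𝒜, A ≠ B → Even ((A ∩ B).card)) :
    𝒜.card ≤ n := by
  simpa using card_le_of_odd_card_of_even_card_inter 𝒜 hodd heven
end

section
/- Let A be a collection of even-sized subsets of an n-element set with |A| ≥ 2^⌊n/2⌋ + 2. Then the number of distinct pairs {A,B} of sets from A with |A ∩ B| odd is at least 2^⌊n/2⌋. -/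
/-!
Pass to characteristic vectors in `𝔽₂ⁿ`: even sets are self-orthogonal, and a family without
odd pairs spans a totally isotropic subspace, so it has at most `M = 2 ^ ⌊n/2⌋` members.
Fix a largest such subfamily `B ⊆ A`. Every `x ∉ B` has an odd partner `q ∈ B`, and the members
of `B` orthogonal to `x` together with their translates by `x` (which are not orthogonal to `q`)
form an isotropic family twice as large, so `x` has at least `|B| - M/2` odd partners in `B`.
This settles the case `2|B| ≥ M + 4`.

Otherwise let `U` be the vectors outside `B` with exactly one odd partner in `B`. Two of them
with the same partner form an odd pair (else they could replace that partner in `B`), so a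
largest isotropic `S ⊆ U` has distinct partners, and the sums `p + ∑ I` (`p ∈ B` not a partner of
`S`, or `p = 0`; `I ⊆ S`) are distinct and isotropic. Hence `2|B| + |S| ≤ M + 4`, and counting
the pairs between `B` and the rest (at least two for each vector outside `U`) together with one
pair for each vector of `U \ S` gives `M` odd pairs.
-/

open Finset Module Submodule Matrix

section Pairs

variable {α : Type*} (r : α → α → Prop) [DecidableRel r]

theorem card_filter_product_eq_sum (s t : Finset α) :
    #((s ×ˢ t).filter fun p => r p.1 p.2) = ∑ x ∈ s, #(t.filter (r x)) := by
  simp only [card_filter, sum_product]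

variable [DecidableEq α] {r}

theorem card_offDiag_filter_sdiff_add_le (hr : ∀ x y, r x y → r y x) {A B : Finset α}
    (hBA : B ⊆ A) :
    #((A \ B).offDiag.filter fun p => r p.1 p.2)
        + 2 * #(((A \ B) ×ˢ B).filter fun p => r p.1 p.2)
      ≤ #(A.offDiag.filter fun p => r p.1 p.2) := by
  have hswap : #((B ×ˢ (A \ B)).filter fun p => r p.1 p.2)
      = #(((A \ B) ×ˢ B).filter fun p => r p.1 p.2) := by
    rw [← card_map (Equiv.prodComm _ _).toEmbedding]
    congr 1
    ext ⟨x, y⟩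
    simp only [mem_map_equiv, mem_filter, mem_product, Equiv.prodComm_symm, Equiv.prodComm_apply,
      Prod.swap_prod_mk]
    exact and_congr And.comm ⟨hr _ _, hr _ _⟩
  rw [two_mul, ← add_assoc]
  nth_rw 2 [← hswap]
  rw [← card_union_of_disjoint, ← card_union_of_disjoint]
  · refine card_le_card fun p hp => ?_
    simp only [mem_union, mem_filter, mem_offDiag, mem_product, mem_sdiff] at hp ⊢
    grind
  all_goals
    simp only [disjoint_left, mem_union, mem_filter, mem_offDiag, mem_product, mem_sdiff]
    grind

theorem two_mul_card_sdiff_le_card_offDiag_filter (hr : ∀ x y, r x y → r y x) {U S : Finset α}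
    (hSU : S ⊆ U) (hS : ∀ u ∈ U \ S, ∃ v ∈ S, r u v) :
    2 * #(U \ S) ≤ #(U.offDiag.filter fun p => r p.1 p.2) := by
  choose! f hfS hf using hS
  have hinj : Set.InjOn (fun u => (u, f u)) ↑(U \ S) := fun u _ v _ h => (Prod.mk.inj h).1
  have hinj' : Set.InjOn (fun u => (f u, u)) ↑(U \ S) := fun u _ v _ h => (Prod.mk.inj h).2
  have hdisj : Disjoint ((U \ S).image fun u => (u, f u)) ((U \ S).image fun u => (f u, u)) := by
    simp only [disjoint_left, mem_image, not_exists, not_and]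
    rintro _ ⟨u, hu, rfl⟩ v hv h
    exact (mem_sdiff.1 hu).2 ((Prod.mk.inj h).1 ▸ hfS v hv)
  calc 2 * #(U \ S)
      = #(((U \ S).image fun u => (u, f u)) ∪ (U \ S).image fun u => (f u, u)) := by
        rw [card_union_of_disjoint hdisj, card_image_of_injOn hinj, card_image_of_injOn hinj']
        ring
    _ ≤ _ := by
        refine card_le_card (union_subset ?_ ?_) <;>
        · intro p hp
          obtain ⟨u, hu, rfl⟩ := mem_image.1 hp
          simp only [mem_filter, mem_offDiag]
          grind

end Pairs

theorem three_mul_le_two_pow_add_two : ∀ s : ℕ, 3 * s ≤ 2 ^ s + 2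
  | 0 | 1 | 2 => by norm_num
  | s + 3 => by
    have := three_mul_le_two_pow_add_two (s + 2)
    have : 4 ≤ 2 ^ (s + 2) := by
      simpa using Nat.pow_le_pow_right two_pos (Nat.le_add_left 2 s)
    rw [pow_succ]
    omega

theorem two_mul_add_le_of_mul_two_pow_le {M b s P : ℕ} (hs : 1 ≤ s) (hP : 1 ≤ P)
    (hb : b ≤ P + s) (h : P * 2 ^ s ≤ M) : 2 * b + s ≤ M + 4 := by
  have h3 := three_mul_le_two_pow_add_two s
  have h2 : 2 ≤ 2 ^ s := by simpa using Nat.pow_le_pow_right two_pos hs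
  nlinarith [Nat.mul_le_mul (Nat.sub_le_sub_right hP 1) (Nat.sub_le_sub_right h2 2)]

theorem two_mul_le_mul_two_mul_sub {M b c : ℕ} (h1 : M + 4 ≤ 2 * b) (h2 : b ≤ M)
    (h3 : M + 2 ≤ c + b) : 2 * M ≤ c * (2 * b - M) := by
  obtain ⟨w, rfl⟩ := Nat.exists_eq_add_of_le h2
  obtain ⟨d, hd⟩ : ∃ d, 2 * b = b + w + 4 + d := ⟨2 * b - (b + w + 4), by omega⟩
  rw [show 2 * b - (b + w) = d + 4 by omega]
  nlinarith

theorem finrank_span_le_half_of_dotProduct_eq_zero {K ι : Type*} [Field K] [Fintype ι]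
    {F : Set (ι → K)} (hF : ∀ u ∈ F, ∀ v ∈ F, u ⬝ᵥ v = 0) :
    finrank K (span K F) ≤ Fintype.card ι / 2 := by
  classical
  let β : LinearMap.BilinForm K (ι → K) := dotProductBilin K K
  have hβ : β.Nondegenerate := by
    refine ⟨fun x hx => funext fun i => ?_, fun y hy => funext fun i => ?_⟩
    · simpa [β] using hx (Pi.single i 1)
    · simpa [β] using hy (Pi.single i 1)
  have hleft : ∀ v ∈ F, span K F ≤ LinearMap.ker (β.flip v) := fun v hv =>
    span_le.2 fun u hu => hF u hu v hv
  have hiso : span K F ≤ β.orthogonal (span K F) := fun v hv w hw =>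
    LinearMap.mem_ker.1 (span_le.2 (fun u hu => hleft u hu hw) hv)
  have hdim := (finrank_mono hiso).trans_eq (LinearMap.BilinForm.finrank_orthogonal hβ _)
  have := finrank_le (span K F)
  simp only [finrank_fintype_fun_eq_card] at hdim this
  omega

namespace Eventown

section

variable {ι : Type*} [Fintype ι]

/-- The characteristic vectors of an eventown family: even sets, pairwise even intersections. -/
def IsEventown (F : Finset (ι → ZMod 2)) : Prop := ∀ u ∈ F, ∀ v ∈ F, u ⬝ᵥ v = 0

theorem card_le_of_subset_span {F : Set (ι → ZMod 2)} (hF : ∀ u ∈ F, ∀ v ∈ F, u ⬝ᵥ v = 0)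
    {G : Finset (ι → ZMod 2)} (hG : ∀ g ∈ G, g ∈ span (ZMod 2) F) :
    #G ≤ 2 ^ (Fintype.card ι / 2) := by
  calc #G = Nat.card (G : Set (ι → ZMod 2)) := by simp
    _ ≤ Nat.card (span (ZMod 2) F) := Nat.card_mono (Set.toFinite _) hG
    _ = 2 ^ finrank (ZMod 2) (span (ZMod 2) F) := by
      rw [natCard_eq_pow_finrank (K := ZMod 2), Nat.card_zmod]
    _ ≤ 2 ^ (Fintype.card ι / 2) :=
      Nat.pow_le_pow_right two_pos (finrank_span_le_half_of_dotProduct_eq_zero hF)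

namespace IsEventown

variable {B C : Finset (ι → ZMod 2)}

theorem card_le (hB : IsEventown B) : #B ≤ 2 ^ (Fintype.card ι / 2) :=
  card_le_of_subset_span hB subset_span

theorem mono (hB : IsEventown B) (hCB : C ⊆ B) : IsEventown C :=
  fun u hu v hv => hB u (hCB hu) v (hCB hv)

theorem insert (hB : IsEventown B) {x : ι → ZMod 2} (hx : x ⬝ᵥ x = 0)
    (hxB : ∀ q ∈ B, x ⬝ᵥ q = 0) : IsEventown (insert x B) := by
  simp only [IsEventown, mem_insert, forall_eq_or_imp]
  exact ⟨⟨hx, hxB⟩, fun u hu => ⟨dotProduct_comm x u ▸ hxB u hu, hB u hu⟩⟩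

end IsEventown

theorem two_mul_card_filter_dotProduct_eq_zero_le {B : Finset (ι → ZMod 2)} (hB : IsEventown B)
    {x q : ι → ZMod 2} (hx : x ⬝ᵥ x = 0)
    (hq : q ∈ B) (hxq : x ⬝ᵥ q ≠ 0) :
    2 * #(B.filter (x ⬝ᵥ · = 0)) ≤ 2 ^ (Fintype.card ι / 2) := by
  set D := B.filter (x ⬝ᵥ · = 0)
  have hD : IsEventown (insert x D) :=
    (hB.mono (filter_subset _ _)).insert hx fun p hp => (mem_filter.1 hp).2
  have hdisj : Disjoint D (D.image (x + ·)) := by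
    simp only [disjoint_right, mem_image, D, mem_filter]
    rintro _ ⟨d, ⟨hdB, -⟩, rfl⟩ ⟨hxdB, -⟩
    exact hxq (by simpa [add_dotProduct, hB d hdB q hq] using hB _ hxdB q hq)
  have hspan : ∀ g ∈ D ∪ D.image (x + ·), g ∈ span (ZMod 2) ↑(insert x D) := by
    simp only [mem_union, mem_image]
    rintro _ (hd | ⟨d, hd, rfl⟩)
    · exact subset_span (by simp [hd])
    · exact add_mem (subset_span (by simp)) (subset_span (by simp [hd]))
  calc 2 * #D = #(D ∪ D.image (x + ·)) := by
        rw [card_union_of_disjoint hdisj, card_image_of_injective _ (add_right_injective x)]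
        ring
    _ ≤ _ := card_le_of_subset_span hD hspan

theorem IsEventown.union {P S : Finset (ι → ZMod 2)} (hP : IsEventown P) (hS : IsEventown S)
    (hPS : ∀ p ∈ P, ∀ x ∈ S, p ⬝ᵥ x = 0) : IsEventown (P ∪ S) := by
  simp only [IsEventown, mem_union]
  rintro u (hu | hu) v (hv | hv)
  exacts [hP u hu v hv, hPS u hu v hv, dotProduct_comm u v ▸ hPS v hv u hu, hS u hu v hv]

theorem card_mul_two_pow_le {P S : Finset (ι → ZMod 2)} (hPS : IsEventown (P ∪ S))
    (τ : (ι → ZMod 2) → ι → ZMod 2) (hτS : ∀ x ∈ S, ∀ y ∈ S, τ x ⬝ᵥ y ≠ 0 ↔ x = y)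
    (hτP : ∀ x ∈ S, ∀ p ∈ P, τ x ⬝ᵥ p = 0) :
    #P * 2 ^ #S ≤ 2 ^ (Fintype.card ι / 2) := by
  classical
  let f : (ι → ZMod 2) × Finset (ι → ZMod 2) → ι → ZMod 2 := fun z => z.1 + ∑ y ∈ z.2, y
  have htest : ∀ p ∈ P, ∀ I ⊆ S, ∀ x ∈ S, τ x ⬝ᵥ f (p, I) ≠ 0 ↔ x ∈ I := by
    intro p hp I hI x hx
    have hoff : ∀ y ∈ I, y ≠ x → τ x ⬝ᵥ y = 0 := fun y hy hyx =>
      not_not.1 fun h => hyx ((hτS x hx y (hI hy)).1 h).symm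
    rw [dotProduct_add, dotProduct_sum, hτP x hx p hp, zero_add]
    by_cases hxI : x ∈ I
    · rw [sum_eq_single_of_mem x hxI hoff]
      exact iff_of_true ((hτS x hx x hx).2 rfl) hxI
    · rw [sum_eq_zero fun y hy => hoff y hy fun h => hxI (h ▸ hy)]
      exact iff_of_false (not_not.2 rfl) hxI
  have hinj : Set.InjOn f ↑(P ×ˢ S.powerset) := by
    rintro ⟨p, I⟩ h₁ ⟨q, J⟩ h₂ he
    simp only [coe_product, coe_powerset, Set.mem_prod, mem_coe, Set.mem_preimage,
      Set.mem_powerset_iff, coe_subset] at h₁ h₂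
    have hIJ : I = J := by
      ext x
      by_cases hx : x ∈ S
      · rw [← htest p h₁.1 I h₁.2 x hx, ← htest q h₂.1 J h₂.2 x hx, he]
      · exact iff_of_false (fun h => hx (h₁.2 h)) (fun h => hx (h₂.2 h))
    subst hIJ
    simpa [f] using he
  calc #P * 2 ^ #S = #((P ×ˢ S.powerset).image f) := by
        rw [card_image_of_injOn hinj, card_product, card_powerset]
    _ ≤ _ := by
        refine card_le_of_subset_span hPS fun g hg => ?_
        obtain ⟨⟨p, I⟩, hpI, rfl⟩ := mem_image.1 hg
        rw [mem_product, mem_powerset] at hpI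
        exact add_mem (subset_span (mem_union_left _ hpI.1))
          (sum_mem fun y hy => subset_span (mem_union_right _ (hpI.2 hy)))

def oddPairs [DecidableEq ι] (A : Finset (ι → ZMod 2)) : Finset ((ι → ZMod 2) × (ι → ZMod 2)) :=
  A.offDiag.filter fun p => p.1 ⬝ᵥ p.2 ≠ 0

structure IsMaxEventown (A B : Finset (ι → ZMod 2)) : Prop where
  subset : B ⊆ A
  isEventown : IsEventown B
  card_le : ∀ C ⊆ A, IsEventown C → #C ≤ #B

theorem exists_isMaxEventown (A : Finset (ι → ZMod 2)) : ∃ B, IsMaxEventown A B := by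
  classical
  obtain ⟨B, hB, hmax⟩ :=
    exists_max_image (A.powerset.filter IsEventown) card ⟨∅, by simp [IsEventown]⟩
  simp only [mem_filter, mem_powerset, and_imp] at hB hmax
  exact ⟨B, hB.1, hB.2, hmax⟩

namespace IsMaxEventown

variable {A B : Finset (ι → ZMod 2)}

theorem exists_dotProduct_ne_zero (hB : IsMaxEventown A B) (hA : ∀ x ∈ A, x ⬝ᵥ x = 0)
    {x : ι → ZMod 2} (hx : x ∈ A \ B) : ∃ q ∈ B, x ⬝ᵥ q ≠ 0 := by
  obtain ⟨hxA, hxB⟩ := mem_sdiff.1 hx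
  by_contra! h
  have := hB.card_le _ (insert_subset hxA hB.subset) (hB.isEventown.insert (hA x hxA) h)
  rw [card_insert_of_notMem hxB] at this
  omega

theorem dotProduct_ne_zero_of_unique_partner (hB : IsMaxEventown A B)
    (hA : ∀ x ∈ A, x ⬝ᵥ x = 0) {x y q : ι → ZMod 2} (hx : x ∈ A \ B) (hy : y ∈ A \ B)
    (hxy : x ≠ y) (hxq : ∀ p ∈ B, x ⬝ᵥ p ≠ 0 → p = q) (hyq : ∀ p ∈ B, y ⬝ᵥ p ≠ 0 → p = q) :
    x ⬝ᵥ y ≠ 0 := by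
  intro hxy0
  obtain ⟨hxA, hxB⟩ := mem_sdiff.1 hx
  obtain ⟨hyA, hyB⟩ := mem_sdiff.1 hy
  have horth : ∀ z, (∀ p ∈ B, z ⬝ᵥ p ≠ 0 → p = q) → ∀ p ∈ B.erase q, z ⬝ᵥ p = 0 :=
    fun z hz p hp => not_not.1 fun h => (mem_erase.1 hp).1 (hz p (mem_erase.1 hp).2 h)
  have hC : IsEventown (insert x (insert y (B.erase q))) :=
    ((hB.isEventown.mono (erase_subset _ _)).insert (hA y hyA) (horth y hyq)).insert (hA x hxA)
      (by simpa [hxy0] using horth x hxq)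
  have hCA : insert x (insert y (B.erase q)) ⊆ A :=
    insert_subset hxA (insert_subset hyA ((erase_subset _ _).trans hB.subset))
  have hcard := hB.card_le _ hCA hC
  rw [card_insert_of_notMem (by simp [hxy, hxB]), card_insert_of_notMem (by simp [hyB])] at hcard
  have := pred_card_le_card_erase (s := B) (a := q)
  omega

theorem two_mul_card_add_card_le (hB : IsMaxEventown A B) (hA : ∀ x ∈ A, x ⬝ᵥ x = 0)
    {S : Finset (ι → ZMod 2)} (hSU : S ⊆ (A \ B).filter fun x => #(B.filter (x ⬝ᵥ · ≠ 0)) = 1)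
    (hS : IsEventown S) (hSne : S.Nonempty) :
    2 * #B + #S ≤ 2 ^ (Fintype.card ι / 2) + 4 := by
  classical
  have hanchor : ∀ x ∈ S, ∃ q ∈ B, ∀ p ∈ B, x ⬝ᵥ p ≠ 0 ↔ p = q := by
    intro x hx
    obtain ⟨q, hq⟩ := card_eq_one.1 (mem_filter.1 (hSU hx)).2
    refine ⟨q, (mem_filter.1 (hq ▸ mem_singleton_self q)).1, fun p hp => ?_⟩
    rw [← mem_singleton, ← hq, mem_filter]
    exact (and_iff_right hp).symm
  choose! a haB ha using hanchor
  have hSAB : S ⊆ A \ B := hSU.trans (filter_subset _ _)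
  have hinj : Set.InjOn a S := fun x hx y hy hxy => by_contra fun hne =>
    hB.dotProduct_ne_zero_of_unique_partner hA (hSAB hx) (hSAB hy) hne
      (fun p hp => (ha x hx p hp).1) (fun p hp => hxy ▸ (ha y hy p hp).1) (hS x hx y hy)
  set P := insert 0 (B \ S.image a)
  have hP : IsEventown P :=
    (hB.isEventown.mono sdiff_subset).insert (dotProduct_zero 0) fun _ _ => zero_dotProduct _
  have hPS : ∀ p ∈ P, ∀ x ∈ S, p ⬝ᵥ x = 0 := by
    simp only [P, mem_insert, mem_sdiff, mem_image, not_exists, not_and, forall_eq_or_imp,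
      zero_dotProduct, implies_true, true_and]
    rintro p ⟨hpB, hpa⟩ x hx
    rw [dotProduct_comm]
    exact not_not.1 fun h => hpa x hx ((ha x hx p hpB).1 h).symm
  have hτS : ∀ x ∈ S, ∀ y ∈ S, a x ⬝ᵥ y ≠ 0 ↔ x = y := fun x hx y hy => by
    rw [dotProduct_comm, ha y hy _ (haB x hx), hinj.eq_iff hx hy]
  have hτP : ∀ x ∈ S, ∀ p ∈ P, a x ⬝ᵥ p = 0 := by
    simp only [P, mem_insert, mem_sdiff, forall_eq_or_imp, dotProduct_zero, true_and]
    exact fun x hx p hp => hB.isEventown _ (haB x hx) p hp.1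
  refine two_mul_add_le_of_mul_two_pow_le hSne.card_pos (card_pos.2 ⟨0, mem_insert_self _ _⟩) ?_
    (card_mul_two_pow_le (hP.union hS hPS) a hτS hτP)
  calc #B ≤ #(B \ S.image a) + #(S.image a) := card_le_card_sdiff_add_card
    _ ≤ #P + #S := add_le_add (card_le_card (subset_insert _ _)) card_image_le

variable [DecidableEq ι]

theorem two_mul_le_card_oddPairs_of_le_two_mul_card (hB : IsMaxEventown A B)
    (hA : ∀ x ∈ A, x ⬝ᵥ x = 0) (hcard : 2 ^ (Fintype.card ι / 2) + 2 ≤ #A)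
    (hlarge : 2 ^ (Fintype.card ι / 2) + 4 ≤ 2 * #B) :
    2 * 2 ^ (Fintype.card ι / 2) ≤ #(oddPairs A) := by
  set M := 2 ^ (Fintype.card ι / 2)
  have hsymm : ∀ u v : ι → ZMod 2, u ⬝ᵥ v ≠ 0 → v ⬝ᵥ u ≠ 0 := fun u v h =>
    dotProduct_comm u v ▸ h
  have hdeg : ∀ x ∈ A \ B, 2 * #B - M ≤ 2 * #(B.filter (x ⬝ᵥ · ≠ 0)) := by
    intro x hx
    obtain ⟨q, hq, hxq⟩ := hB.exists_dotProduct_ne_zero hA hx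
    have hhalf := two_mul_card_filter_dotProduct_eq_zero_le hB.isEventown
      (hA x (mem_sdiff.1 hx).1) hq hxq
    have hsplit := card_filter_add_card_filter_not (s := B) (x ⬝ᵥ · ≠ 0)
    simp only [not_not] at hsplit
    omega
  have hcross : #(A \ B) * (2 * #B - M)
      ≤ 2 * #(((A \ B) ×ˢ B).filter fun p => p.1 ⬝ᵥ p.2 ≠ 0) := by
    rw [card_filter_product_eq_sum fun u v : ι → ZMod 2 => u ⬝ᵥ v ≠ 0, mul_sum]
    exact card_nsmul_le_sum _ _ _ hdeg
  have hAB := card_sdiff_add_card_eq_card hB.subset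
  have hquad := two_mul_le_mul_two_mul_sub hlarge hB.isEventown.card_le
    (by omega : M + 2 ≤ #(A \ B) + #B)
  have hpairs := card_offDiag_filter_sdiff_add_le hsymm hB.subset
  unfold oddPairs
  omega

theorem two_mul_le_card_oddPairs_of_two_mul_card_lt (hB : IsMaxEventown A B)
    (hA : ∀ x ∈ A, x ⬝ᵥ x = 0) (hcard : 2 ^ (Fintype.card ι / 2) + 2 ≤ #A)
    (hsmall : 2 * #B < 2 ^ (Fintype.card ι / 2) + 4) :
    2 * 2 ^ (Fintype.card ι / 2) ≤ #(oddPairs A) := by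
  set M := 2 ^ (Fintype.card ι / 2)
  have hsymm : ∀ u v : ι → ZMod 2, u ⬝ᵥ v ≠ 0 → v ⬝ᵥ u ≠ 0 := fun u v h =>
    dotProduct_comm u v ▸ h
  set U := (A \ B).filter fun x => #(B.filter (x ⬝ᵥ · ≠ 0)) = 1
  have hUA : U ⊆ A := (filter_subset _ _).trans sdiff_subset
  obtain ⟨S, hS⟩ := exists_isMaxEventown U
  have hSB : 2 * #B + #S ≤ M + 4 := by
    rcases S.eq_empty_or_nonempty with rfl | hSne
    · simp only [card_empty]
      omega
    exact hB.two_mul_card_add_card_le hA hS.subset hS.isEventown hSne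
  have hcross : 2 * #(A \ B) ≤ #(((A \ B) ×ˢ B).filter fun p => p.1 ⬝ᵥ p.2 ≠ 0) + #U := by
    rw [card_filter_product_eq_sum fun u v : ι → ZMod 2 => u ⬝ᵥ v ≠ 0, card_filter,
      ← sum_add_distrib, mul_comm, ← smul_eq_mul]
    refine card_nsmul_le_sum _ _ _ fun x hx => ?_
    obtain ⟨q, hq, hxq⟩ := hB.exists_dotProduct_ne_zero hA hx
    have : 0 < #(B.filter (x ⬝ᵥ · ≠ 0)) := card_pos.2 ⟨q, mem_filter.2 ⟨hq, hxq⟩⟩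
    split_ifs <;> omega
  have hwithin : 2 * #(U \ S) ≤ #(oddPairs (A \ B)) :=
    (two_mul_card_sdiff_le_card_offDiag_filter hsymm hS.subset
      fun u hu => hS.exists_dotProduct_ne_zero (fun x hx => hA x (hUA hx)) hu).trans
      (card_le_card (filter_subset_filter _ (offDiag_mono (filter_subset _ _))))
  have hpairs := card_offDiag_filter_sdiff_add_le hsymm hB.subset
  have hUS := card_sdiff_add_card_eq_card hS.subset
  have hAB := card_sdiff_add_card_eq_card hB.subset
  unfold oddPairs at *
  omega

end IsMaxEventown

theorem two_mul_le_card_oddPairs [DecidableEq ι] {A : Finset (ι → ZMod 2)}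
    (hA : ∀ x ∈ A, x ⬝ᵥ x = 0) (hcard : 2 ^ (Fintype.card ι / 2) + 2 ≤ #A) :
    2 * 2 ^ (Fintype.card ι / 2) ≤ #(oddPairs A) := by
  obtain ⟨B, hB⟩ := exists_isMaxEventown A
  rcases lt_or_ge (2 * #B) (2 ^ (Fintype.card ι / 2) + 4) with hsmall | hlarge
  · exact hB.two_mul_le_card_oddPairs_of_two_mul_card_lt hA hcard hsmall
  · exact hB.two_mul_le_card_oddPairs_of_le_two_mul_card hA hcard hlarge

end

section CharVec

variable {ι : Type*} [DecidableEq ι]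

def charVec (s : Finset ι) : ι → ZMod 2 := fun i => if i ∈ s then 1 else 0

theorem charVec_injective : Function.Injective (charVec (ι := ι)) := fun s t h => by
  ext i
  have hi := congrFun h i
  simp only [charVec] at hi
  split_ifs at hi <;> simp_all

variable [Fintype ι]

theorem charVec_dotProduct (s t : Finset ι) : charVec s ⬝ᵥ charVec t = #(s ∩ t) := by
  simp only [charVec, dotProduct, mul_ite, mul_one, mul_zero, ← ite_and, sum_boole]
  congr 2
  ext i
  simp [and_comm]

theorem card_oddPairs_image_charVec (𝒜 : Finset (Finset ι)) :
    #(oddPairs (𝒜.image charVec)) = #(𝒜.offDiag.filter fun p => Odd #(p.1 ∩ p.2)) := by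
  rw [← card_image_of_injective _ (charVec_injective.prodMap charVec_injective)]
  congr 1
  ext ⟨u, v⟩
  simp only [oddPairs, mem_image, mem_filter, mem_offDiag, Prod.exists, Prod.map_apply,
    Prod.mk.injEq]
  constructor
  · rintro ⟨⟨⟨s, hs, rfl⟩, ⟨t, ht, rfl⟩, hne⟩, hodd⟩
    rw [charVec_dotProduct, ZMod.natCast_ne_zero_iff_odd] at hodd
    exact ⟨s, t, ⟨⟨hs, ht, fun h => hne (congrArg charVec h)⟩, hodd⟩, rfl, rfl⟩
  · rintro ⟨s, t, ⟨⟨hs, ht, hne⟩, hodd⟩, rfl, rfl⟩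
    rw [charVec_dotProduct, ZMod.natCast_ne_zero_iff_odd]
    exact ⟨⟨⟨s, hs, rfl⟩, ⟨t, ht, rfl⟩, charVec_injective.ne hne⟩, hodd⟩

end CharVec

end Eventown

open Eventown in
/-- Eventown supersaturation, s = 2: a family of at least `2^⌊n/2⌋ + 2`
even-sized subsets of an `n`-element set has at least `2^⌊n/2⌋` unordered pairs
with odd-sized intersection.  (Counting ordered pairs via `offDiag`, the bound
is doubled.) -/
theorem eventown_supersat_two (n : ℕ) (𝒜 : Finset (Finset (Fin n)))
    (heven : ∀ A ∈ 𝒜, Even A.card)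
    (hcard : 2 ^ (n / 2) + 2 ≤ 𝒜.card) :
    2 * 2 ^ (n / 2) ≤
      (𝒜.offDiag.filter fun p => Odd ((p.1 ∩ p.2).card)).card := by
  have hA : ∀ x ∈ 𝒜.image charVec, x ⬝ᵥ x = 0 := by
    simpa [charVec_dotProduct, ZMod.natCast_eq_zero_iff_even] using heven
  have hcard' : 2 ^ (Fintype.card (Fin n) / 2) + 2 ≤ #(𝒜.image charVec) := by
    rwa [card_image_of_injective _ charVec_injective, Fintype.card_fin]
  simpa [card_oddPairs_image_charVec] using two_mul_le_card_oddPairs hA hcard'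
end

section
/- Let A be a collection of odd-sized subsets of an n-element set with |A| ≥ n + 1. Then the number of distinct pairs {A,B} of sets from A with |A ∩ B| odd is at least 3. -/
/-!
Identify each set with its indicator vector in `𝔽₂ⁿ`, so that `|A ∩ B|` is odd exactly when the
dot product is `1`, and suppose there are at most two odd pairs. There are more than `n` vectors,
so some nonempty subfamily `S` sums to zero. Dotting this sum with a member of `S` shows that each
member of `S` meets an odd number of other members of `S` oddly; moreover, in characteristic `2`,
`|S| = ∑_S v⬝v = (∑_S v)⬝(∑_S v) = 0`, and `|S| ≠ 2` as the sets are distinct. Hence `|S| ≥ 4`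
and the (at most two) odd pairs form a perfect matching of `S`. This holds for every zero-sum
subfamily, so a fixed `A` with odd partner `B` lies in all of them: the other vectors are
independent, hence span `𝔽₂ⁿ`. But `v_A` and `v_B` have the same dot product with every vector
of the family, so `v_A = v_B`, a contradiction.
-/

open Finset Matrix

theorem CharTwo.sum_dotProduct_sum_self {ι α R : Type*} [Fintype α] [CommSemiring R] [CharP R 2]
    (s : Finset ι) (v : ι → α → R) :
    (∑ i ∈ s, v i) ⬝ᵥ (∑ i ∈ s, v i) = ∑ i ∈ s, v i ⬝ᵥ v i := by
  simp only [dotProduct, Finset.sum_apply, CharTwo.sum_mul_self]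
  exact sum_comm

theorem ZMod.sum_eq_card_filter_eq_one {ι : Type*} (s : Finset ι) (f : ι → ZMod 2) :
    ∑ i ∈ s, f i = #{i ∈ s | f i = 1} := by
  rw [natCast_card_filter]
  refine sum_congr rfl fun i _ => ?_
  generalize f i = x
  revert x
  decide

theorem ZMod.exists_sum_eq_zero_of_not_linearIndepOn {ι V : Type*} [AddCommGroup V]
    [Module (ZMod 2) V] {v : ι → V} {s : Finset ι} (h : ¬ LinearIndepOn (ZMod 2) v s) :
    ∃ t ⊆ s, t.Nonempty ∧ ∑ i ∈ t, v i = 0 := by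
  obtain ⟨f, hf, i, hi, hfi⟩ := not_linearIndepOn_finset_iff.mp h
  have h01 : ∀ x : ZMod 2, x = 0 ∨ x = 1 := by decide
  refine ⟨{j ∈ s | f j = 1}, filter_subset _ _, ⟨i, mem_filter.mpr ⟨hi, ?_⟩⟩, ?_⟩
  · exact (h01 (f i)).resolve_left hfi
  · rw [sum_filter]
    refine (sum_congr rfl fun j _ => ?_).trans hf
    rcases h01 (f j) with hj | hj <;> simp [hj]

theorem LinearIndepOn.finset_card_le_fintype_card {ι α K : Type*} [Fintype α] [Field K]
    {v : ι → α → K} {s : Finset ι} (h : LinearIndepOn K v s) : #s ≤ Fintype.card α := by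
  simpa using h.fintype_card_le_finrank

theorem LinearIndepOn.span_image_eq_top_of_card_le {ι α K : Type*} [Fintype α] [Field K]
    {v : ι → α → K} {s : Finset ι} (h : LinearIndepOn K v s) (hs : Fintype.card α ≤ #s) :
    Submodule.span K (v '' s) = ⊤ := by
  rw [Set.image_eq_range]
  exact LinearIndependent.span_eq_top_of_card_eq_finrank' h
    (by simpa using h.finset_card_le_fintype_card.antisymm hs)

theorem Matrix.eq_of_dotProduct_eq_of_span_eq_top {α R : Type*} [Fintype α] [CommSemiring R]
    {t : Set (α → R)} (ht : Submodule.span R t = ⊤) {u u' : α → R}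
    (h : ∀ w ∈ t, u ⬝ᵥ w = u' ⬝ᵥ w) : u = u' :=
  dotProduct_eq u u' fun w => LinearMap.congr_fun
    (LinearMap.ext_on ht (f := dotProductBilin R R u) (g := dotProductBilin R R u') h) w

theorem indicator_dotProduct_indicator {α : Type*} [Fintype α] [DecidableEq α]
    (A B : Finset α) :
    (A : Set α).indicator (1 : α → ZMod 2) ⬝ᵥ (B : Set α).indicator 1 = #(A ∩ B) := by
  simp only [dotProduct, Set.indicator_apply, mem_coe, Pi.one_apply, mul_boole, ← ite_and,
    sum_boole]
  congr 2
  ext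
  simp [and_comm]

section OddPairs

variable {ι α : Type*} [Fintype α]

theorem even_card_of_sum_eq_zero {v : ι → α → ZMod 2} {S : Finset ι} (hS : ∑ i ∈ S, v i = 0)
    (hself : ∀ i ∈ S, v i ⬝ᵥ v i = 1) : Even #S := by
  rw [← ZMod.natCast_eq_zero_iff_even, cast_card, ← sum_congr rfl hself,
    ← CharTwo.sum_dotProduct_sum_self, hS, zero_dotProduct]

def oddPairs (v : ι → α → ZMod 2) (s : Finset ι) : Finset (ι × ι) :=
  {p ∈ s.offDiag | v p.1 ⬝ᵥ v p.2 = 1}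

variable {v : ι → α → ZMod 2} {s : Finset ι}

theorem oddPairs_mono {t : Finset ι} (h : s ⊆ t) : oddPairs v s ⊆ oddPairs v t :=
  filter_subset_filter _ (offDiag_mono h)

theorem swap_mem_oddPairs {p : ι × ι} (h : p ∈ oddPairs v s) : p.swap ∈ oddPairs v s := by
  simp only [oddPairs, mem_filter, mem_offDiag, Prod.fst_swap, Prod.snd_swap] at h ⊢
  exact ⟨⟨h.1.2.1, h.1.1, h.1.2.2.symm⟩, dotProduct_comm (v p.1) (v p.2) ▸ h.2⟩

theorem even_card_oddPairs (s : Finset ι) : Even #(oddPairs v s) := by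
  classical
  -- in characteristic `2` the sum over `s ×ˢ s` equals the sum over the diagonal
  have hsplit := sum_union (disjoint_diag_offDiag s) (f := fun p => v p.1 ⬝ᵥ v p.2)
  rw [diag_union_offDiag, sum_product, sum_diag] at hsplit
  simp only [← dotProduct_sum, ← sum_dotProduct, CharTwo.sum_dotProduct_sum_self] at hsplit
  rw [← ZMod.natCast_eq_zero_iff_even, oddPairs, ← ZMod.sum_eq_card_filter_eq_one]
  exact left_eq_add.mp hsplit

variable [DecidableEq ι]

def oddNeighbors (v : ι → α → ZMod 2) (s : Finset ι) (i : ι) : Finset ι :=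
  {j ∈ s.erase i | v i ⬝ᵥ v j = 1}

theorem mk_mem_oddPairs {i j : ι} :
    (i, j) ∈ oddPairs v s ↔ i ∈ s ∧ j ∈ oddNeighbors v s i := by
  simp only [oddPairs, oddNeighbors, mem_filter, mem_offDiag, mem_erase]
  tauto

theorem card_oddPairs (s : Finset ι) : #(oddPairs v s) = ∑ i ∈ s, #(oddNeighbors v s i) := by
  rw [card_eq_sum_card_fiberwise (s := oddPairs v s) (t := s) (f := Prod.fst) fun p hp =>
    (mem_offDiag.mp (mem_filter.mp hp).1).1]
  refine sum_congr rfl fun i hi => card_nbij' Prod.snd (fun j => (i, j)) ?_ ?_ ?_ ?_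
  · rintro ⟨a, b⟩ h
    simp only [coe_filter, Set.mem_ofPred_eq, mk_mem_oddPairs] at h
    obtain ⟨⟨-, hb⟩, rfl⟩ := h
    exact hb
  · intro j hj
    simp_all [mk_mem_oddPairs]
  · rintro ⟨a, b⟩ h
    simp_all
  · intro j _
    rfl

theorem odd_card_oddNeighbors_of_sum_eq_zero {S : Finset ι} (hS : ∑ j ∈ S, v j = 0) {i : ι}
    (hi : i ∈ S) (hvi : v i ⬝ᵥ v i = 1) : Odd #(oddNeighbors v S i) := by
  have h0 : v i ⬝ᵥ v i + ∑ j ∈ S.erase i, v i ⬝ᵥ v j = 0 := by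
    rw [add_sum_erase S (fun j => v i ⬝ᵥ v j) hi, ← dotProduct_sum, hS, dotProduct_zero]
  rw [hvi, ZMod.sum_eq_card_filter_eq_one, CharTwo.add_eq_zero] at h0
  exact ZMod.natCast_eq_one_iff_odd.mp h0.symm

theorem oddNeighbors_eq_of_oddPairs_eq {S : Finset ι} (hSs : S ⊆ s)
    (h : oddPairs v S = oddPairs v s) {i : ι} (hi : i ∈ S) :
    oddNeighbors v S i = oddNeighbors v s i := by
  ext j
  simpa [mk_mem_oddPairs, hi, hSs hi] using congrArg ((i, j) ∈ ·) h

theorem dotProduct_eq_one_iff_mem_insert_oddNeighbors {i j : ι} (hj : j ∈ s)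
    (hvi : v i ⬝ᵥ v i = 1) : v i ⬝ᵥ v j = 1 ↔ j ∈ insert i (oddNeighbors v s i) := by
  by_cases hji : j = i
  · simp [hji, hvi]
  · simp [oddNeighbors, hji, hj]

theorem dotProduct_eq_of_oddNeighbors_eq_singleton {A B X : ι} (hA : v A ⬝ᵥ v A = 1)
    (hB : v B ⬝ᵥ v B = 1) (hNA : oddNeighbors v s A = {B}) (hNB : oddNeighbors v s B = {A})
    (hX : X ∈ s) : v A ⬝ᵥ v X = v B ⬝ᵥ v X := by
  have h01 : ∀ x y : ZMod 2, (x = 1 ↔ y = 1) → x = y := by decide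
  refine h01 _ _ ?_
  rw [dotProduct_eq_one_iff_mem_insert_oddNeighbors hX hA,
    dotProduct_eq_one_iff_mem_insert_oddNeighbors hX hB, hNA, hNB, pair_comm]

theorem oddPairs_eq_and_card_oddNeighbors_eq_one (hinj : Set.InjOn v s)
    (hself : ∀ i ∈ s, v i ⬝ᵥ v i = 1) (hpairs : #(oddPairs v s) < 6) {S : Finset ι}
    (hSs : S ⊆ s) (hne : S.Nonempty) (hS : ∑ i ∈ S, v i = 0) :
    oddPairs v S = oddPairs v s ∧ ∀ i ∈ S, #(oddNeighbors v s i) = 1 := by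
  have hpos : ∀ i ∈ S, 1 ≤ #(oddNeighbors v S i) := fun i hi =>
    (odd_card_oddNeighbors_of_sum_eq_zero hS hi (hself i (hSs hi))).pos
  have hS2 : #S ≠ 2 := by
    intro h2
    obtain ⟨a, b, hab, rfl⟩ := card_eq_two.mp h2
    rw [sum_pair hab, add_eq_zero_iff_eq_neg, ZModModule.neg_eq_self] at hS
    exact hab (hinj (hSs (mem_insert_self a {b})) (hSs (by simp)) hS)
  have hS4 : 4 ≤ #S := by
    obtain ⟨k, hk⟩ := even_card_of_sum_eq_zero hS fun i hi => hself i (hSs hi)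
    have := hne.card_pos
    omega
  have hle : #S ≤ #(oddPairs v S) := by
    rw [card_oddPairs, card_eq_sum_ones]
    exact sum_le_sum hpos
  have hmono := card_le_card (oddPairs_mono (v := v) hSs)
  have h4 : #(oddPairs v s) ≤ 4 := by
    obtain ⟨k, hk⟩ := even_card_oddPairs (v := v) s
    omega
  have heq := eq_of_subset_of_card_le (oddPairs_mono (v := v) hSs) (by omega)
  have hsum : ∑ i ∈ S, 1 = ∑ i ∈ S, #(oddNeighbors v S i) := by
    rw [← card_oddPairs, ← card_eq_sum_ones]
    omega
  refine ⟨heq, fun i hi => ?_⟩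
  rw [← oddNeighbors_eq_of_oddPairs_eq hSs heq hi]
  exact ((sum_eq_sum_iff_of_le hpos).mp hsum i hi).symm

theorem six_le_card_oddPairs (hinj : Set.InjOn v s) (hself : ∀ i ∈ s, v i ⬝ᵥ v i = 1)
    (hcard : Fintype.card α < #s) : 6 ≤ #(oddPairs v s) := by
  by_contra! hpairs
  have hdep (S : Finset ι) := oddPairs_eq_and_card_oddNeighbors_eq_one hinj hself hpairs (S := S)
  obtain ⟨S₀, hS₀s, ⟨A, hA⟩, hS₀⟩ := ZMod.exists_sum_eq_zero_of_not_linearIndepOn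
    fun h => hcard.not_ge h.finset_card_le_fintype_card
  obtain ⟨hpairs₀, hdeg₀⟩ := hdep S₀ hS₀s ⟨A, hA⟩ hS₀
  have hAs := hS₀s hA
  obtain ⟨B, hNA⟩ := card_eq_one.mp (hdeg₀ A hA)
  have hAB : (A, B) ∈ oddPairs v s := mk_mem_oddPairs.mpr ⟨hAs, hNA ▸ mem_singleton_self B⟩
  obtain ⟨hBs, hABs⟩ := mk_mem_oddPairs.mp (swap_mem_oddPairs hAB)
  have hNB : oddNeighbors v s B = {A} := by
    have hB : B ∈ S₀ := (mk_mem_oddPairs.mp (hpairs₀ ▸ swap_mem_oddPairs hAB)).1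
    exact (eq_of_subset_of_card_le (singleton_subset_iff.mpr hABs) (by simp [hdeg₀ B hB])).symm
  have hindep : LinearIndepOn (ZMod 2) v ↑(s.erase A) := by
    by_contra h
    obtain ⟨S, hSs, hne, hS⟩ := ZMod.exists_sum_eq_zero_of_not_linearIndepOn h
    have hAS := (mk_mem_oddPairs.mp ((hdep S (hSs.trans (erase_subset A s)) hne hS).1 ▸ hAB)).1
    exact notMem_erase A s (hSs hAS)
  have hspan := hindep.span_image_eq_top_of_card_le (by rw [card_erase_of_mem hAs]; omega)
  have hvAB : v A = v B := eq_of_dotProduct_eq_of_span_eq_top hspan <| by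
    rintro _ ⟨X, hX, rfl⟩
    exact dotProduct_eq_of_oddNeighbors_eq_singleton (hself A hAs) (hself B hBs) hNA hNB
      (mem_of_mem_erase hX)
  exact (mem_offDiag.mp (mem_filter.mp hAB).1).2.2 (hinj hAs hBs hvAB)

end OddPairs

/-- Oddtown supersaturation: a family of at least `n + 1` odd-sized subsets of
an `n`-element set has at least `3` unordered pairs with odd-sized
intersection.  (Counting ordered pairs via `offDiag`, the bound is doubled.) -/
theorem oddtown_supersat (n : ℕ) (𝒜 : Finset (Finset (Fin n)))
    (hodd : ∀ A ∈ 𝒜, Odd A.card)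
    (hcard : n + 1 ≤ 𝒜.card) :
    2 * 3 ≤ (𝒜.offDiag.filter fun p => Odd ((p.1 ∩ p.2).card)).card := by
  let χ : Finset (Fin n) → Fin n → ZMod 2 := fun A => (A : Set (Fin n)).indicator 1
  have hχ : ∀ A B, χ A ⬝ᵥ χ B = 1 ↔ Odd #(A ∩ B) := fun A B => by
    rw [indicator_dotProduct_indicator, ZMod.natCast_eq_one_iff_odd]
  have key := six_le_card_oddPairs (v := χ) (s := 𝒜)
    (fun A _ B _ h => coe_inj.mp (Set.indicator_one_inj (ZMod 2) h))
    (fun A hA => (hχ A A).mpr (by rw [inter_self]; exact hodd A hA))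
    (by rwa [Fintype.card_fin])
  simpa only [oddPairs, hχ] using key
end

section
/- Let A be a collection of m even-sized subsets of [n] containing an eventown subfamily A' of size t > 2^(⌊n/2⌋−1) that is maximal in A (no set of A \ A' can be added keeping eventown). Then the number of pairs of sets in A with odd-sized intersection is at least (t − 2^(⌊n/2⌋−1))·(m − t). -/
/-!
Identify sets with their characteristic vectors in `𝔽₂ⁿ`, so that `|A ∩ B| mod 2` is the dot
product. An eventown family spans a self-orthogonal subspace `V`, hence `dim V ≤ ⌊n/2⌋`. If `B`
meets some `A₀ ∈ 𝒜'` oddly, the members of `𝒜'` meeting `B` evenly lie in the proper subspace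
`V ∩ B^⊥`, of size at most `2^(⌊n/2⌋-1)`; so every `B ∈ 𝒜 \ 𝒜'` meets at least
`t - 2^(⌊n/2⌋-1)` members of `𝒜'` oddly. Summing over `B` and counting both orders of each
pair gives the bound.
-/

open Finset Module

namespace LinearMap.BilinForm

theorem two_mul_finrank_le_of_le_orthogonal {K V : Type*} [Field K] [AddCommGroup V]
    [Module K V] [FiniteDimensional K V] {B : LinearMap.BilinForm K V} (hB : B.Nondegenerate)
    {W : Submodule K V} (hW : W ≤ B.orthogonal W) :
    2 * finrank K W ≤ finrank K V := by
  have hle := Submodule.finrank_mono hW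
  rw [finrank_orthogonal hB] at hle
  have := W.finrank_le
  omega

theorem span_le_orthogonal_span {R M : Type*} [CommRing R] [AddCommGroup M] [Module R M]
    {B : LinearMap.BilinForm R M} {S : Set M} (hS : ∀ x ∈ S, ∀ y ∈ S, B x y = 0) :
    Submodule.span R S ≤ B.orthogonal (Submodule.span R S) := by
  refine Submodule.span_le.2 fun y hy => ?_
  have : Submodule.span R S ≤ LinearMap.ker (B.flip y) :=
    Submodule.span_le.2 fun x hx => hS x hx y hy
  exact fun x hx => this hx

end LinearMap.BilinForm

theorem dotProductBilin_nondegenerate {R ι : Type*} [CommRing R] [Fintype ι] :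
    (dotProductBilin R R : LinearMap.BilinForm R (ι → R)).Nondegenerate :=
  ⟨fun v hv => dotProduct_eq_zero v hv,
    fun v hv => dotProduct_eq_zero v fun w => by rw [dotProduct_comm]; exact hv w⟩

namespace Finset

theorem two_mul_mul_card_sdiff_le_card_filter_offDiag {α : Type*} [DecidableEq α]
    {s t : Finset α} (r : α → α → Prop) [DecidableRel r] (hr : ∀ a b, r a b → r b a)
    (hts : t ⊆ s) {k : ℕ} (hk : ∀ b ∈ s \ t, k ≤ #{a ∈ t | r a b}) :
    2 * (k * #(s \ t)) ≤ #(s.offDiag.filter fun p => r p.1 p.2) := by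
  set P := (t ×ˢ (s \ t)).filter fun p => r p.1 p.2
  have hP : k * #(s \ t) ≤ #P := by
    rw [card_filter, sum_product_right, mul_comm, ← smul_eq_mul, ← sum_const]
    refine sum_le_sum fun b hb => ?_
    rw [← card_filter]
    exact hk b hb
  have hdisj : Disjoint P (P.image Prod.swap) := by
    simp only [P, disjoint_left, mem_image, mem_filter, mem_product, mem_sdiff]
    rintro _ ⟨⟨-, -, hbt⟩, -⟩ ⟨_, ⟨⟨hbt', -⟩, -⟩, rfl⟩
    exact hbt hbt'
  have hsub : P ∪ P.image Prod.swap ⊆ s.offDiag.filter fun p => r p.1 p.2 := by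
    rw [union_subset_iff]
    simp only [P, subset_iff, mem_image, mem_filter, mem_product, mem_sdiff, mem_offDiag]
    constructor
    · rintro ⟨a, b⟩ ⟨⟨ha, hb, hbt⟩, hab⟩
      exact ⟨⟨hts ha, hb, fun h => hbt (h ▸ ha)⟩, hab⟩
    · rintro _ ⟨⟨a, b⟩, ⟨⟨ha, hb, hbt⟩, hab⟩, rfl⟩
      exact ⟨⟨hb, hts ha, fun h : b = a => hbt (h ▸ ha)⟩, hr a b hab⟩
  calc 2 * (k * #(s \ t)) ≤ #P + #(P.image Prod.swap) := by
        rw [card_image_of_injective _ Prod.swap_injective]; omega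
    _ = #(P ∪ P.image Prod.swap) := (card_union_of_disjoint hdisj).symm
    _ ≤ _ := card_le_card hsub

variable {ι : Type*} [DecidableEq ι]

def charVec (s : Finset ι) : ι → ZMod 2 := fun i => if i ∈ s then 1 else 0

theorem charVec_injective : Function.Injective (charVec (ι := ι)) := by
  intro s t h
  ext i
  have := congrFun h i
  by_cases hs : i ∈ s <;> by_cases ht : i ∈ t <;> simp_all [charVec]

variable [Fintype ι]

theorem charVec_dotProduct_charVec (s t : Finset ι) :
    charVec s ⬝ᵥ charVec t = #(s ∩ t) := by
  simp [dotProduct, charVec, inter_comm]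

theorem charVec_dotProduct_charVec_eq_zero_iff {s t : Finset ι} :
    charVec s ⬝ᵥ charVec t = 0 ↔ Even #(s ∩ t) := by
  rw [charVec_dotProduct_charVec, ZMod.natCast_eq_zero_iff_even]

theorem card_filter_even_inter_le {𝒜 : Finset (Finset ι)}
    (h𝒜 : ∀ A ∈ 𝒜, ∀ B ∈ 𝒜, Even #(A ∩ B)) {A₀ B : Finset ι} (hA₀ : A₀ ∈ 𝒜)
    (hodd : Odd #(A₀ ∩ B)) :
    #{A ∈ 𝒜 | Even #(A ∩ B)} ≤ 2 ^ (Fintype.card ι / 2 - 1) := by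
  set V := Submodule.span (ZMod 2) (charVec '' (𝒜 : Set (Finset ι)))
  set W := V ⊓ LinearMap.ker (dotProductBilin (ZMod 2) (ZMod 2) (charVec B))
  have hself : V ≤ LinearMap.BilinForm.orthogonal (dotProductBilin (ZMod 2) (ZMod 2)) V := by
    refine LinearMap.BilinForm.span_le_orthogonal_span ?_
    rintro _ ⟨A, hA, rfl⟩ _ ⟨A', hA', rfl⟩
    exact charVec_dotProduct_charVec_eq_zero_iff.2 (h𝒜 A hA A' hA')
  have hV : 2 * finrank (ZMod 2) V ≤ Fintype.card ι := by
    simpa only [finrank_fintype_fun_eq_card] using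
      LinearMap.BilinForm.two_mul_finrank_le_of_le_orthogonal dotProductBilin_nondegenerate hself
  have hWV : W < V := by
    refine lt_of_le_of_ne inf_le_left fun hWV => ?_
    have hA₀W : charVec A₀ ∈ W := hWV ▸ Submodule.subset_span ⟨A₀, hA₀, rfl⟩
    have heven : charVec B ⬝ᵥ charVec A₀ = 0 := (Submodule.mem_inf.1 hA₀W).2
    rw [dotProduct_comm, charVec_dotProduct_charVec_eq_zero_iff] at heven
    exact Nat.not_even_iff_odd.2 hodd heven
  have hW := Submodule.finrank_lt_finrank_of_lt hWV
  have hcardW : Nat.card W = 2 ^ finrank (ZMod 2) W := by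
    rw [natCard_eq_pow_finrank (K := ZMod 2), Nat.card_zmod]
  calc #(𝒜.filter fun A => Even #(A ∩ B))
      = (charVec '' ((𝒜.filter fun A => Even #(A ∩ B) : Finset _) : Set (Finset ι))).ncard := by
        rw [Set.ncard_image_of_injective _ charVec_injective, Set.ncard_coe_finset]
    _ ≤ (W : Set (ι → ZMod 2)).ncard := by
        refine Set.ncard_le_ncard ?_ (Set.toFinite _)
        rintro _ ⟨A, hA, rfl⟩
        rw [coe_filter] at hA
        refine ⟨Submodule.subset_span ⟨A, hA.1, rfl⟩, ?_⟩
        change charVec B ⬝ᵥ charVec A = 0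
        rw [charVec_dotProduct_charVec_eq_zero_iff, inter_comm]
        exact hA.2
    _ = 2 ^ finrank (ZMod 2) W := hcardW ▸ (Nat.card_coe_set_eq _).symm
    _ ≤ 2 ^ (Fintype.card ι / 2 - 1) := Nat.pow_le_pow_right two_pos (by omega)

theorem card_sub_two_pow_le_card_filter_odd_inter {𝒜 : Finset (Finset ι)}
    (h𝒜 : ∀ A ∈ 𝒜, ∀ B ∈ 𝒜, Even #(A ∩ B)) {A₀ B : Finset ι} (hA₀ : A₀ ∈ 𝒜)
    (hodd : Odd #(A₀ ∩ B)) :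
    #𝒜 - 2 ^ (Fintype.card ι / 2 - 1) ≤ #{A ∈ 𝒜 | Odd #(A ∩ B)} := by
  have hsplit := card_filter_add_card_filter_not (s := 𝒜) fun A => Odd #(A ∩ B)
  simp only [Nat.not_odd_iff_even] at hsplit
  have := card_filter_even_inter_le h𝒜 hA₀ hodd
  omega

end Finset

theorem op_lower_bound_maximal_eventown_general (n : ℕ)
    (𝒜 𝒜' : Finset (Finset (Fin n)))
    (hsub : 𝒜' ⊆ 𝒜)
    (hevent : ∀ A ∈ 𝒜', ∀ B ∈ 𝒜', Even ((A ∩ B).card))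
    (hmax : ∀ B ∈ 𝒜 \ 𝒜', ∃ A ∈ 𝒜', Odd ((A ∩ B).card)) :
    2 * ((𝒜'.card - 2 ^ (n / 2 - 1)) * (𝒜.card - 𝒜'.card)) ≤
      (𝒜.offDiag.filter fun p => Odd ((p.1 ∩ p.2).card)).card := by
  rw [← card_sdiff_of_subset hsub]
  refine two_mul_mul_card_sdiff_le_card_filter_offDiag (fun A B => Odd #(A ∩ B))
    (fun A B h => inter_comm A B ▸ h) hsub fun B hB => ?_
  obtain ⟨A₀, hA₀, hodd⟩ := hmax B hB
  simpa only [Fintype.card_fin] using card_sub_two_pow_le_card_filter_odd_inter hevent hA₀ hodd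

/-- Inequality (2): if `𝒜` is a family of even-sized subsets of `[n]`
containing a maximal (w.r.t. `𝒜`) eventown subfamily `𝒜'` of size
`t > 2^(⌊n/2⌋ - 1)`, then `op(𝒜) ≥ (t - 2^(⌊n/2⌋-1))·(|𝒜| - t)`.
(`offDiag` counts ordered pairs, hence the factor `2`.) -/
theorem op_lower_bound_maximal_eventown (n : ℕ)
    (𝒜 𝒜' : Finset (Finset (Fin n)))
    (heven : ∀ A ∈ 𝒜, Even A.card)
    (hsub : 𝒜' ⊆ 𝒜)
    (hevent : ∀ A ∈ 𝒜', ∀ B ∈ 𝒜', Even ((A ∩ B).card))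
    (hmax : ∀ B ∈ 𝒜 \ 𝒜', ∃ A ∈ 𝒜', Odd ((A ∩ B).card))
    (ht : 2 ^ (n / 2 - 1) < 𝒜'.card) :
    2 * ((𝒜'.card - 2 ^ (n / 2 - 1)) * (𝒜.card - 𝒜'.card)) ≤
      (𝒜.offDiag.filter fun p => Odd ((p.1 ∩ p.2).card)).card :=
  op_lower_bound_maximal_eventown_general n 𝒜 𝒜' hsub hevent hmax
end

section
/- For n = 4l with k = 2l, there exists a family A of 2^k + s even-sized subsets of [n] (for any 1 ≤ s ≤ 2^k − 2^l) such that the number of pairs from A with odd-sized intersection equals exactly s·2^(k−1). -/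
/-!
Identify `x_{1,i}, …, x_{4,i}` with `4i, …, 4i+3`. The `2^{2l}` sets
`A_J = ⋃_{j ∈ J} {2j, 2j+1}` form an eventown, and so do their images `B_K` under the
permutation swapping `4i+1` and `4i+3`; hence odd intersections only occur between an `A_J`
and a `B_K`. This eventown is maximal: a set `X ⊆ [4l]` outside it meets some pair
`{2j, 2j+1}` in exactly one point, so toggling `j` in `J` flips the parity of `|A_J ∩ X|`,
and exactly `2^{2l-1}` of the `A_J` meet `X` oddly. Finally `B_K` is itself some `A_J` only
when `K` is a union of pairs `{2i, 2i+1}`, which leaves at least `2^{2l} - 2^l` choices of `K`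
for the `s` extra sets.
-/

open Finset

section Eventown

variable {α : Type*} [DecidableEq α]

def IsEventown (𝒜 : Finset (Finset α)) : Prop :=
  ∀ X ∈ 𝒜, ∀ Y ∈ 𝒜, Even #(X ∩ Y)

theorem IsEventown.even_card {𝒜 : Finset (Finset α)} (h : IsEventown 𝒜) {X : Finset α}
    (hX : X ∈ 𝒜) : Even #X := by
  simpa using h X hX X hX

theorem card_offDiag_filter_odd_inter_union {𝒜 ℬ : Finset (Finset α)} (hdisj : Disjoint 𝒜 ℬ)
    (h𝒜 : IsEventown 𝒜) (hℬ : IsEventown ℬ) :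
    #((𝒜 ∪ ℬ).offDiag.filter fun p => Odd #(p.1 ∩ p.2)) =
      2 * ∑ Y ∈ ℬ, #(𝒜.filter fun X => Odd #(X ∩ Y)) := by
  have hdiag : (𝒜 ∪ ℬ).offDiag.filter (fun p => Odd #(p.1 ∩ p.2)) =
      ((𝒜 ∪ ℬ) ×ˢ (𝒜 ∪ ℬ)).filter fun p => Odd #(p.1 ∩ p.2) := by
    ext ⟨X, Y⟩
    simp only [mem_filter, mem_offDiag, mem_product]
    refine ⟨fun ⟨⟨hX, hY, _⟩, h⟩ => ⟨⟨hX, hY⟩, h⟩, fun ⟨⟨hX, hY⟩, h⟩ => ⟨⟨hX, hY, ?_⟩, h⟩⟩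
    rintro rfl
    rw [inter_self, ← Nat.not_even_iff_odd] at h
    exact h ((mem_union.1 hX).elim h𝒜.even_card hℬ.even_card)
  have hzero : ∀ {𝒞 : Finset (Finset α)}, IsEventown 𝒞 →
      ∑ X ∈ 𝒞, #(𝒞.filter fun Y => Odd #(X ∩ Y)) = 0 :=
    fun h𝒞 => sum_eq_zero fun X hX => card_eq_zero.2 <| filter_false_of_mem fun Y hY =>
      Nat.not_odd_iff_even.2 (h𝒞 X hX Y hY)
  have hswap : ∑ X ∈ 𝒜, #(ℬ.filter fun Y => Odd #(X ∩ Y)) =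
      ∑ Y ∈ ℬ, #(𝒜.filter fun X => Odd #(X ∩ Y)) := by
    simp only [card_filter]
    exact sum_comm
  rw [hdiag, card_filter, sum_product, sum_union hdisj]
  simp only [sum_union hdisj, ← card_filter, sum_add_distrib, hzero h𝒜, hzero hℬ, hswap,
    inter_comm]
  ring

theorem card_filter_powerset_insert_of_iff_not {s : Finset α} {a : α} (ha : a ∉ s)
    (p : Finset α → Prop) [DecidablePred p] (hp : ∀ t ⊆ s, p (insert a t) ↔ ¬ p t) :
    #((insert a s).powerset.filter p) = 2 ^ #s := by
  rw [card_filter, sum_powerset_insert ha, ← sum_add_distrib, ← card_powerset,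
    card_eq_sum_ones]
  refine sum_congr rfl fun t ht => ?_
  by_cases h : p t <;> simp [h, hp t (mem_powerset.1 ht)]

theorem even_card_pair_inter_iff {a b : α} (hab : a ≠ b) (X : Finset α) :
    Even #({a, b} ∩ X) ↔ (a ∈ X ↔ b ∈ X) := by
  by_cases ha : a ∈ X <;> by_cases hb : b ∈ X <;>
    simp [insert_inter_of_mem, insert_inter_of_notMem, ha, hb, hab]

end Eventown

def pairUnion (J : Finset ℕ) : Finset ℕ :=
  J.biUnion fun j => {2 * j, 2 * j + 1}

theorem mem_pairUnion {J : Finset ℕ} {x : ℕ} : x ∈ pairUnion J ↔ x / 2 ∈ J := by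
  simp only [pairUnion, mem_biUnion, mem_insert, mem_singleton]
  refine ⟨fun ⟨j, hj, hx⟩ => ?_, fun h => ⟨x / 2, h, by omega⟩⟩
  rwa [show x / 2 = j by omega]

theorem pairUnion_singleton (j : ℕ) : pairUnion {j} = {2 * j, 2 * j + 1} :=
  singleton_biUnion

theorem card_pairUnion (J : Finset ℕ) : #(pairUnion J) = 2 * #J := by
  rw [pairUnion, card_biUnion, sum_const_nat fun j _ => card_pair (by omega), mul_comm]
  intro i _ j _ hij
  simp only [Function.onFun, disjoint_insert_left, disjoint_insert_right, disjoint_singleton,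
    mem_insert, mem_singleton]
  omega

theorem pairUnion_inter (J J' : Finset ℕ) :
    pairUnion J ∩ pairUnion J' = pairUnion (J ∩ J') := by
  ext x
  simp only [mem_inter, mem_pairUnion]

theorem pairUnion_union (J J' : Finset ℕ) :
    pairUnion (J ∪ J') = pairUnion J ∪ pairUnion J' := by
  ext x
  simp only [mem_union, mem_pairUnion]

theorem even_card_pairUnion_inter (J J' : Finset ℕ) : Even #(pairUnion J ∩ pairUnion J') := by
  rw [pairUnion_inter, card_pairUnion]
  exact even_two_mul _

theorem pairUnion_injective : Function.Injective pairUnion := fun J J' h => by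
  ext j
  simpa [mem_pairUnion] using congrArg (2 * j ∈ ·) h

theorem pairUnion_subset_range {J : Finset ℕ} {n : ℕ} (hJ : J ⊆ range n) :
    pairUnion J ⊆ range (2 * n) := fun x hx => by
  have := mem_range.1 (hJ (mem_pairUnion.1 hx))
  exact mem_range.2 (by omega)

theorem image_div_two_subset_range {X : Finset ℕ} {n : ℕ} (hX : X ⊆ range (2 * n)) :
    X.image (· / 2) ⊆ range n := by
  simp only [subset_iff, mem_image, mem_range, forall_exists_index, and_imp]
  rintro _ x hx rfl
  have := mem_range.1 (hX hx)
  omega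

theorem pairUnion_image_div_two {X : Finset ℕ} (hX : ∀ i, 2 * i ∈ X ↔ 2 * i + 1 ∈ X) :
    pairUnion (X.image (· / 2)) = X := by
  ext x
  simp only [mem_pairUnion, mem_image]
  refine ⟨fun ⟨y, hy, hxy⟩ => ?_, fun hx => ⟨x, hx, rfl⟩⟩
  have := hX (x / 2)
  rcases (by omega : x = 2 * (x / 2) ∨ x = 2 * (x / 2) + 1) with hx | hx <;>
    rcases (by omega : y = 2 * (x / 2) ∨ y = 2 * (x / 2) + 1) with hy' | hy' <;>
    rw [hx] <;> rw [hy'] at hy <;> tauto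

theorem card_pairUnion_insert_inter {J : Finset ℕ} {j : ℕ} (hj : j ∉ J) (X : Finset ℕ) :
    #(pairUnion (insert j J) ∩ X) = #(pairUnion {j} ∩ X) + #(pairUnion J ∩ X) := by
  have hdisj : Disjoint (pairUnion {j}) (pairUnion J) := by
    simp only [disjoint_left, mem_pairUnion, mem_singleton]
    rintro x rfl
    exact hj
  rw [insert_eq, pairUnion_union, union_inter_distrib_right,
    card_union_of_disjoint (hdisj.mono inter_subset_left inter_subset_left)]

def pairUnionFamily (n : ℕ) : Finset (Finset ℕ) :=
  (range n).powerset.image pairUnion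

theorem card_pairUnionFamily (n : ℕ) : #(pairUnionFamily n) = 2 ^ n := by
  rw [pairUnionFamily, card_image_of_injective _ pairUnion_injective, card_powerset, card_range]

theorem isEventown_pairUnionFamily (n : ℕ) : IsEventown (pairUnionFamily n) := by
  simp only [IsEventown, pairUnionFamily, forall_mem_image]
  exact fun J _ J' _ => even_card_pairUnion_inter J J'

theorem exists_odd_card_pairUnion_singleton_inter {n : ℕ} {X : Finset ℕ}
    (hX : X ⊆ range (2 * n)) (hXn : X ∉ pairUnionFamily n) :
    ∃ j ∈ range n, Odd #(pairUnion {j} ∩ X) := by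
  by_contra! h
  refine hXn (mem_image.2 ⟨X.image (· / 2), mem_powerset.2 (image_div_two_subset_range hX),
    pairUnion_image_div_two fun i => ?_⟩)
  by_cases hi : i < n
  · have := h i (mem_range.2 hi)
    rwa [Nat.not_odd_iff_even, pairUnion_singleton, even_card_pair_inter_iff (by omega)] at this
  · have h1 : 2 * i ∉ X := fun hx => by have := mem_range.1 (hX hx); omega
    have h2 : 2 * i + 1 ∉ X := fun hx => by have := mem_range.1 (hX hx); omega
    tauto

theorem card_filter_odd_inter_of_notMem_pairUnionFamily {n : ℕ} {X : Finset ℕ}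
    (hX : X ⊆ range (2 * n)) (hXn : X ∉ pairUnionFamily n) :
    #((pairUnionFamily n).filter fun A => Odd #(A ∩ X)) = 2 ^ (n - 1) := by
  obtain ⟨j, hj, hodd⟩ := exists_odd_card_pairUnion_singleton_inter hX hXn
  rw [pairUnionFamily, filter_image, card_image_of_injective _ pairUnion_injective,
    ← insert_erase hj, card_filter_powerset_insert_of_iff_not (notMem_erase j _),
    card_erase_of_mem hj, card_range]
  intro t ht
  rw [card_pairUnion_insert_inter (fun h => notMem_erase j _ (ht h)), Nat.odd_add]
  simp only [hodd, true_iff, Nat.not_odd_iff_even]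

def blockSwap : Equiv.Perm ℕ :=
  Function.Involutive.toPerm
    (fun x => if x % 4 = 1 then x + 2 else if x % 4 = 3 then x - 2 else x)
    fun x => by dsimp only; split_ifs <;> omega

theorem blockSwap_apply (x : ℕ) :
    blockSwap x = if x % 4 = 1 then x + 2 else if x % 4 = 3 then x - 2 else x :=
  rfl

theorem blockSwap_symm : blockSwap.symm = blockSwap :=
  Function.Involutive.toPerm_symm _

theorem blockSwap_div_four (x : ℕ) : blockSwap x / 4 = x / 4 := by
  rw [blockSwap_apply]
  split_ifs <;> omega

theorem blockSwap_four_mul (i : ℕ) : blockSwap (4 * i) = 4 * i := by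
  rw [blockSwap_apply]
  split_ifs <;> omega

theorem blockSwap_four_mul_add_one (i : ℕ) : blockSwap (4 * i + 1) = 4 * i + 3 := by
  rw [blockSwap_apply]
  split_ifs <;> omega

def twistedPairUnion (K : Finset ℕ) : Finset ℕ :=
  (pairUnion K).map blockSwap.toEmbedding

theorem mem_twistedPairUnion {K : Finset ℕ} {x : ℕ} :
    x ∈ twistedPairUnion K ↔ blockSwap x / 2 ∈ K := by
  rw [twistedPairUnion, mem_map_equiv, blockSwap_symm, mem_pairUnion]

theorem twistedPairUnion_injective : Function.Injective twistedPairUnion :=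
  (map_injective _).comp pairUnion_injective

theorem twistedPairUnion_subset_range {K : Finset ℕ} {l : ℕ} (hK : K ⊆ range (2 * l)) :
    twistedPairUnion K ⊆ range (4 * l) := fun x hx => by
  have h1 := mem_range.1 (hK (mem_twistedPairUnion.1 hx))
  have h2 := blockSwap_div_four x
  exact mem_range.2 (by omega)

theorem isEventown_image_twistedPairUnion (𝒦 : Finset (Finset ℕ)) :
    IsEventown (𝒦.image twistedPairUnion) := by
  simp only [IsEventown, forall_mem_image, twistedPairUnion, ← map_inter, card_map]
  exact fun J _ J' _ => even_card_pairUnion_inter J J'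

theorem mem_image_pairUnion_of_twistedPairUnion_eq {K J : Finset ℕ} {l : ℕ}
    (hK : K ⊆ range (2 * l)) (hKJ : twistedPairUnion K = pairUnion J) :
    K ∈ (range l).powerset.image pairUnion := by
  refine mem_image.2 ⟨K.image (· / 2), mem_powerset.2 (image_div_two_subset_range hK),
    pairUnion_image_div_two fun i => ?_⟩
  have h : 4 * i ∈ pairUnion J ↔ 4 * i + 1 ∈ pairUnion J := by
    simp only [mem_pairUnion, show (4 * i + 1) / 2 = 4 * i / 2 by omega]
  rwa [← hKJ, mem_twistedPairUnion, mem_twistedPairUnion, blockSwap_four_mul,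
    blockSwap_four_mul_add_one, show 4 * i / 2 = 2 * i by omega,
    show (4 * i + 3) / 2 = 2 * i + 1 by omega] at h

theorem le_card_filter_twistedPairUnion_notMem (l : ℕ) :
    2 ^ (2 * l) - 2 ^ l ≤ #((range (2 * l)).powerset.filter fun K =>
      twistedPairUnion K ∉ pairUnionFamily (2 * l)) := by
  have hsplit := card_filter_add_card_filter_not (s := (range (2 * l)).powerset)
    (p := fun K => twistedPairUnion K ∈ pairUnionFamily (2 * l))
  have hin : #((range (2 * l)).powerset.filter fun K =>
      twistedPairUnion K ∈ pairUnionFamily (2 * l)) ≤ 2 ^ l := by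
    calc _ ≤ #((range l).powerset.image pairUnion) := card_le_card fun K hK => by
            obtain ⟨hK, hKA⟩ := mem_filter.1 hK
            obtain ⟨J, -, hJ⟩ := mem_image.1 hKA
            exact mem_image_pairUnion_of_twistedPairUnion_eq (mem_powerset.1 hK) hJ.symm
      _ ≤ 2 ^ l := card_image_le.trans_eq (by rw [card_powerset, card_range])
  rw [card_powerset, card_range] at hsplit
  omega

theorem eventown_supersat_tight_general (l s : ℕ)
    (hs₂ : s ≤ 2 ^ (2 * l) - 2 ^ l) :
    ∃ 𝒜 : Finset (Finset ℕ),
      (∀ A ∈ 𝒜, A ⊆ Finset.range (4 * l)) ∧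
      𝒜.card = 2 ^ (2 * l) + s ∧
      (∀ A ∈ 𝒜, Even A.card) ∧
      (𝒜.offDiag.filter fun p => Odd ((p.1 ∩ p.2).card)).card =
        2 * (s * 2 ^ (2 * l - 1)) := by
  obtain ⟨𝒦, h𝒦, rfl⟩ :=
    exists_subset_card_eq (hs₂.trans (le_card_filter_twistedPairUnion_notMem l))
  rw [show 4 * l = 2 * (2 * l) by ring]
  set 𝒜 := pairUnionFamily (2 * l)
  set ℬ := 𝒦.image twistedPairUnion
  have hℬ : ∀ Y ∈ ℬ, Y ⊆ range (2 * (2 * l)) ∧ Y ∉ 𝒜 := forall_mem_image.2 fun K hK => by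
    obtain ⟨hK, hKA⟩ := mem_filter.1 (h𝒦 hK)
    exact ⟨(twistedPairUnion_subset_range (mem_powerset.1 hK)).trans_eq (by ring_nf), hKA⟩
  have hdisj : Disjoint 𝒜 ℬ := disjoint_right.2 fun Y hY => (hℬ Y hY).2
  have h𝒜 := isEventown_pairUnionFamily (2 * l)
  have hℬe := isEventown_image_twistedPairUnion 𝒦
  refine ⟨𝒜 ∪ ℬ, fun Y hY => ?_, ?_, fun Y hY => ?_, ?_⟩
  · rcases mem_union.1 hY with hY | hY
    · obtain ⟨J, hJ, rfl⟩ := mem_image.1 hY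
      exact pairUnion_subset_range (mem_powerset.1 hJ)
    · exact (hℬ Y hY).1
  · rw [card_union_of_disjoint hdisj, card_pairUnionFamily,
      card_image_of_injective _ twistedPairUnion_injective]
  · exact (mem_union.1 hY).elim h𝒜.even_card hℬe.even_card
  · rw [card_offDiag_filter_odd_inter_union hdisj h𝒜 hℬe, sum_const_nat fun Y hY =>
      card_filter_odd_inter_of_notMem_pairUnionFamily (hℬ Y hY).1 (hℬ Y hY).2,
      card_image_of_injective _ twistedPairUnion_injective]

/-- Tightness of eventown supersaturation: for `n = 4l`, `k = 2l`, and any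
`1 ≤ s ≤ 2^k - 2^l`, there is a family of `2^k + s` even-sized subsets of
`[n]` with exactly `s · 2^(k-1)` unordered pairs of odd-sized intersection
(ordered-pair count via `offDiag`, hence the factor `2`). -/
theorem eventown_supersat_tight (l s : ℕ) (hs₁ : 1 ≤ s)
    (hs₂ : s ≤ 2 ^ (2 * l) - 2 ^ l) :
    ∃ 𝒜 : Finset (Finset ℕ),
      (∀ A ∈ 𝒜, A ⊆ Finset.range (4 * l)) ∧
      𝒜.card = 2 ^ (2 * l) + s ∧
      (∀ A ∈ 𝒜, Even A.card) ∧
      (𝒜.offDiag.filter fun p => Odd ((p.1 ∩ p.2).card)).card =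
        2 * (s * 2 ^ (2 * l - 1)) :=
  eventown_supersat_tight_general l s hs₂
end

section
/- For each B in the family B that is not in the family A (of the standard two-eventown construction on n = 4l points), the number of sets A ∈ A with |A ∩ B| odd is exactly 2^(k−1), where k = 2l. -/
/-!
Each `A ∈ 𝒜` is `⋃_{j ∈ J} A_j` for a unique `J ⊆ [k]`, and since the pairs `A_j` are disjoint,
`|A ∩ B| ≡ |J ∩ S| (mod 2)` where `S` is the set of indices `j` with `|A_j ∩ B|` odd.
A set `B ⊆ [4l]` meeting every pair `A_j` evenly is a union of such pairs, so `B ∉ 𝒜` makes `S`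
nonempty, and adding a fixed element of `S` to the sets `J` avoiding it flips the parity of
`|J ∩ S|`, so exactly half of the `2^k` sets `J` are counted.
-/

/-- The basic pair `A_j` in the `i`-th block (`j = 2i` or `j = 2i+1`, zero
indexed): `A_{2i} = {x₁ᵢ, x₂ᵢ}`, `A_{2i+1} = {x₃ᵢ, x₄ᵢ}`, where the block
`Xᵢ = {4i, 4i+1, 4i+2, 4i+3}`. -/
def blockA (j : ℕ) : Finset ℕ :=
  {4 * (j / 2) + 2 * (j % 2), 4 * (j / 2) + 2 * (j % 2) + 1}

/-- The basic pair `B_j`: `B_{2i} = {x₁ᵢ, x₄ᵢ}`, `B_{2i+1} = {x₂ᵢ, x₃ᵢ}`. -/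
def blockB (j : ℕ) : Finset ℕ :=
  if j % 2 = 0 then {4 * (j / 2), 4 * (j / 2) + 3}
  else {4 * (j / 2) + 1, 4 * (j / 2) + 2}

/-- The eventown family `𝒜 = {⋃_{j ∈ J} A_j : J ⊆ [k]}`. -/
def famA (k : ℕ) : Finset (Finset ℕ) :=
  (Finset.range k).powerset.image fun J => J.biUnion blockA

/-- The eventown family `ℬ = {⋃_{j ∈ J} B_j : J ⊆ [k]}`. -/
def famB (k : ℕ) : Finset (Finset ℕ) :=
  (Finset.range k).powerset.image fun J => J.biUnion blockB

open Finset

section PowersetParity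

variable {α : Type*} [DecidableEq α] {p : α → Prop} [DecidablePred p]

lemma card_filter_powerset_odd_card_filter {s : Finset α} {a : α} (ha : a ∈ s) (hpa : p a) :
    #{u ∈ s.powerset | Odd #{x ∈ u | p x}} = 2 ^ (#s - 1) := by
  obtain ⟨t, hat, rfl⟩ : ∃ t, a ∉ t ∧ s = insert a t :=
    ⟨s.erase a, notMem_erase a s, (insert_erase ha).symm⟩
  have hflip : ∀ u ∈ t.powerset, Odd #{x ∈ insert a u | p x} ↔ ¬Odd #{x ∈ u | p x} := by
    intro u hu
    have hau : a ∉ {x ∈ u | p x} := fun h => hat (mem_powerset.mp hu (mem_filter.mp h).1)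
    rw [filter_insert, if_pos hpa, card_insert_of_notMem hau, Nat.odd_add_one]
  rw [card_insert_of_notMem hat, Nat.add_sub_cancel, ← card_powerset, powerset_insert,
    filter_union, filter_image]
  have hdisj : Disjoint {u ∈ t.powerset | Odd #{x ∈ u | p x}}
      (image (insert a) {u ∈ t.powerset | Odd #{x ∈ insert a u | p x}}) := by
    refine disjoint_left.mpr fun u hu hu' => ?_
    obtain ⟨v, -, rfl⟩ := mem_image.mp hu'
    exact hat (mem_powerset.mp (mem_filter.mp hu).1 (mem_insert_self a v))
  have hinj : Set.InjOn (insert a) (t.powerset : Set (Finset α)) := fun u hu v hv huv => by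
    rw [← erase_insert (fun h => hat (mem_powerset.mp hu h)),
      ← erase_insert (fun h => hat (mem_powerset.mp hv h)), huv]
  rw [card_union_of_disjoint hdisj, card_image_of_injOn (hinj.mono (filter_subset _ _)),
    filter_congr hflip, card_filter_add_card_filter_not]

end PowersetParity

lemma mem_blockA {x j : ℕ} : x ∈ blockA j ↔ x / 2 = j := by
  simp only [blockA, mem_insert, mem_singleton]
  omega

lemma card_blockA (j : ℕ) : #(blockA j) = 2 :=
  card_pair (by omega)

lemma mem_biUnion_blockA {x : ℕ} {J : Finset ℕ} : x ∈ J.biUnion blockA ↔ x / 2 ∈ J := by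
  simp [mem_blockA]

lemma biUnion_blockA_injective : Function.Injective fun J : Finset ℕ => J.biUnion blockA := by
  intro J J' h
  ext j
  have h2j := congrArg (2 * j ∈ ·) h
  simp only [eq_iff_iff, mem_biUnion_blockA, Nat.mul_div_cancel_left j two_pos] at h2j
  exact h2j

lemma pairwiseDisjoint_blockA (s : Set ℕ) : s.PairwiseDisjoint blockA :=
  fun _ _ _ _ hij => disjoint_left.mpr fun _ hi hj =>
    hij ((mem_blockA.mp hi).symm.trans (mem_blockA.mp hj))

lemma odd_card_biUnion_blockA_inter_iff (J B : Finset ℕ) :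
    Odd #(J.biUnion blockA ∩ B) ↔ Odd #{j ∈ J | Odd #(blockA j ∩ B)} := by
  rw [biUnion_inter, card_biUnion, odd_sum_iff_odd_card_odd]
  exact (pairwiseDisjoint_blockA _).mono_on fun j _ => inter_subset_left

lemma blockA_subset_of_even_card_inter {B : Finset ℕ} {x : ℕ} (hx : x ∈ B)
    (heven : Even #(blockA (x / 2) ∩ B)) : blockA (x / 2) ⊆ B := by
  have hpos : 0 < #(blockA (x / 2) ∩ B) :=
    card_pos.mpr ⟨x, mem_inter.mpr ⟨mem_blockA.mpr rfl, hx⟩⟩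
  have hle : #(blockA (x / 2) ∩ B) ≤ 2 := (card_le_card inter_subset_left).trans_eq (card_blockA _)
  have htwo : #(blockA (x / 2) ∩ B) = 2 := by
    obtain ⟨m, hm⟩ := heven
    omega
  exact inter_eq_left.mp
    (eq_of_subset_of_card_le inter_subset_left (by rw [card_blockA, htwo]))

lemma mem_famA_of_forall_even_card_inter {k : ℕ} {B : Finset ℕ} (hB : B ⊆ range (2 * k))
    (heven : ∀ j < k, Even #(blockA j ∩ B)) : B ∈ famA k := by
  refine mem_image.mpr ⟨{j ∈ range k | blockA j ⊆ B}, mem_powerset.mpr (filter_subset _ _), ?_⟩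
  ext x
  simp only [mem_biUnion_blockA, mem_filter, mem_range]
  constructor
  · rintro ⟨-, hsub⟩
    exact hsub (mem_blockA.mpr rfl)
  · intro hx
    have hxk : x / 2 < k := by have := mem_range.mp (hB hx); omega
    exact ⟨hxk, blockA_subset_of_even_card_inter hx (heven _ hxk)⟩

theorem card_filter_famA_odd_card_inter {k : ℕ} {B : Finset ℕ} (hB : B ⊆ range (2 * k))
    (hBA : B ∉ famA k) : #{A ∈ famA k | Odd #(A ∩ B)} = 2 ^ (k - 1) := by
  obtain ⟨j, hj, hodd⟩ : ∃ j ∈ range k, Odd #(blockA j ∩ B) := by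
    by_contra! h
    exact hBA (mem_famA_of_forall_even_card_inter hB fun j hj =>
      Nat.not_odd_iff_even.mp (h j (mem_range.mpr hj)))
  rw [famA, filter_image, card_image_of_injective _ biUnion_blockA_injective]
  simp only [odd_card_biUnion_blockA_inter_iff]
  rw [card_filter_powerset_odd_card_filter hj hodd, card_range]

lemma subset_range_of_mem_famB {l : ℕ} {B : Finset ℕ} (hB : B ∈ famB (2 * l)) :
    B ⊆ range (2 * (2 * l)) := by
  obtain ⟨J, hJ, rfl⟩ := mem_image.mp hB
  intro x hx
  obtain ⟨j, hj, hxj⟩ := mem_biUnion.mp hx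
  have hjl := mem_range.mp (mem_powerset.mp hJ hj)
  rw [mem_range]
  unfold blockB at hxj
  split_ifs at hxj <;> simp only [mem_insert, mem_singleton] at hxj <;> omega

/-- For each `B ∈ ℬ \ 𝒜` in the standard two-eventown construction on
`n = 4l` points (`k = 2l`), exactly `2^(k-1)` sets `A ∈ 𝒜` satisfy
`|A ∩ B|` odd. -/
theorem odd_intersections_with_famA (l : ℕ) (B : Finset ℕ)
    (hB : B ∈ famB (2 * l) \ famA (2 * l)) :
    ((famA (2 * l)).filter fun A => Odd ((A ∩ B).card)).card =
      2 ^ (2 * l - 1) := by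
  obtain ⟨hBB, hBA⟩ := mem_sdiff.mp hB
  exact card_filter_famA_odd_card_inter (subset_range_of_mem_famB hBB) hBA
end

section
/- Let F be a family of k-element subsets of [n] with no two sets intersecting in exactly k−2 elements. Then for every (k−3)-element set A ⊆ [n], the link F(A) = {B ⊆ [n]\A : A ∪ B ∈ F} is an oddtown family (all members have size 3, odd, and pairwise intersections of even size), and hence |F(A)| ≤ n − k + 3. -/
/-!
Over `ZMod 2` the incidence matrix `M` of an oddtown family satisfies `M * Mᵀ = 1`, so the family
is no larger than the ground set (`|L| = rank 1 ≤ rank M ≤ |U|`). The link of a `(k-3)`-set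
`A` consists of `3`-sets disjoint from `A`, and two of them meet in `1` element exactly when
the corresponding members of `F` meet in `k - 2`; so distinct members of the link meet in
`0` or `2` elements, and the oddtown bound on the ground set `Aᶜ` gives `n - k + 3`.
-/

open Finset Matrix

namespace Finset

variable {α : Type*} [DecidableEq α]

section Oddtown

def incidenceMatrix (R : Type*) [Zero R] [One R] (L : Finset (Finset α)) (U : Finset α) :
    Matrix L U R :=
  of fun B x => if (x : α) ∈ (B : Finset α) then 1 else 0

theorem incidenceMatrix_mul_transpose_apply (R : Type*) [Semiring R]
    {L : Finset (Finset α)} {U : Finset α} (hsub : ∀ B ∈ L, B ⊆ U) (B B' : L) :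
    (incidenceMatrix R L U * (incidenceMatrix R L U)ᵀ) B B' = (#((B : Finset α) ∩ B') : R) := by
  have hU : U ∩ ((B : Finset α) ∩ B') = (B : Finset α) ∩ B' :=
    inter_eq_right.mpr (inter_subset_left.trans (hsub _ B.2))
  simp only [incidenceMatrix, mul_apply, transpose_apply, of_apply, ite_zero_mul_ite_zero,
    mul_one, ← mem_inter]
  rw [sum_coe_sort U fun x => if x ∈ (B : Finset α) ∩ B' then (1 : R) else 0, sum_boole,
    filter_mem_eq_inter, hU]

theorem card_le_card_of_oddtown {L : Finset (Finset α)} {U : Finset α}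
    (hsub : ∀ B ∈ L, B ⊆ U) (hodd : ∀ B ∈ L, Odd #B)
    (heven : ∀ B ∈ L, ∀ B' ∈ L, B ≠ B' → Even #(B ∩ B')) :
    #L ≤ #U := by
  set M := incidenceMatrix (ZMod 2) L U
  have hM : M * Mᵀ = 1 := by
    ext B B'
    rw [incidenceMatrix_mul_transpose_apply _ hsub, one_apply]
    split_ifs with h
    · rw [← h, inter_self, ZMod.natCast_eq_one_iff_odd]
      exact hodd _ B.2
    · exact ZMod.natCast_eq_zero_iff_even.mpr (heven _ B.2 _ B'.2 (Subtype.coe_injective.ne h))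
  calc #L = (1 : Matrix L L (ZMod 2)).rank := by rw [rank_one, Fintype.card_coe]
    _ = (M * Mᵀ).rank := by rw [hM]
    _ ≤ M.rank := rank_mul_le_left _ _
    _ ≤ #U := (rank_le_card_width M).trans_eq (Fintype.card_coe U)

end Oddtown

section Link

variable [Fintype α] {F : Finset (Finset α)} {A B B' : Finset α}

def link (F : Finset (Finset α)) (A : Finset α) : Finset (Finset α) :=
  (univ : Finset α).powerset.filter fun B => B ∩ A = ∅ ∧ A ∪ B ∈ F

theorem mem_link : B ∈ link F A ↔ Disjoint B A ∧ A ∪ B ∈ F := by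
  simp [link, disjoint_iff_inter_eq_empty]

theorem subset_compl_of_mem_link (hB : B ∈ link F A) : B ⊆ Aᶜ :=
  subset_compl_iff_disjoint_right.mpr (mem_link.mp hB).1

theorem card_add_card_of_mem_link {k : ℕ} (huniform : ∀ S ∈ F, #S = k) (hB : B ∈ link F A) :
    #A + #B = k := by
  obtain ⟨hdisj, hF⟩ := mem_link.mp hB
  rw [← card_union_of_disjoint hdisj.symm, huniform _ hF]

theorem card_add_card_inter_ne_of_mem_link {m : ℕ}
    (havoid : ∀ S ∈ F, ∀ T ∈ F, S ≠ T → #(S ∩ T) ≠ m)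
    (hB : B ∈ link F A) (hB' : B' ∈ link F A) (hne : B ≠ B') :
    #A + #(B ∩ B') ≠ m := by
  obtain ⟨hd, hF⟩ := mem_link.mp hB
  obtain ⟨hd', hF'⟩ := mem_link.mp hB'
  have hUne : A ∪ B ≠ A ∪ B' := fun h => hne <| by
    rw [← union_sdiff_cancel_left hd.symm, h, union_sdiff_cancel_left hd'.symm]
  have hdisj : Disjoint A (B ∩ B') := hd.symm.mono_right inter_subset_left
  rw [← card_union_of_disjoint hdisj, union_inter_distrib_left]
  exact havoid _ hF _ hF' hUne

end Link

theorem card_inter_lt_of_ne {s t : Finset α} (hne : s ≠ t) (hcard : #s = #t) :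
    #(s ∩ t) < #s := by
  refine card_lt_card (inter_subset_left.ssubset_of_ne fun h => hne ?_)
  exact eq_of_subset_of_card_le (inter_eq_left.mp h) hcard.ge

end Finset

/-- If `F` is a family of `k`-subsets of `[n]` with no two members meeting in
exactly `k - 2` elements, then for every `(k-3)`-set `A` the link
`F(A) = {B ⊆ [n] \ A : A ∪ B ∈ F}` is an oddtown family (3-element sets with
pairwise even intersections), and hence `|F(A)| ≤ n - k + 3`. -/
theorem link_is_oddtown (n k : ℕ) (hk : 4 ≤ k) (F : Finset (Finset (Fin n)))
    (huniform : ∀ S ∈ F, S.card = k)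
    (havoid : ∀ S ∈ F, ∀ T ∈ F, S ≠ T → (S ∩ T).card ≠ k - 2)
    (A : Finset (Fin n)) (hA : A.card = k - 3) :
    let L : Finset (Finset (Fin n)) :=
      (Finset.univ : Finset (Fin n)).powerset.filter
        fun B => B ∩ A = ∅ ∧ A ∪ B ∈ F
    (∀ B ∈ L, B.card = 3) ∧
    (∀ B ∈ L, ∀ B' ∈ L, B ≠ B' → Even ((B ∩ B').card)) ∧
    L.card ≤ n - k + 3 := by
  show (∀ B ∈ link F A, #B = 3) ∧ (∀ B ∈ link F A, ∀ B' ∈ link F A, B ≠ B' → Even #(B ∩ B')) ∧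
    #(link F A) ≤ n - k + 3
  have hcard : ∀ B ∈ link F A, #B = 3 := fun B hB => by
    have := card_add_card_of_mem_link huniform hB
    omega
  have heven : ∀ B ∈ link F A, ∀ B' ∈ link F A, B ≠ B' → Even #(B ∩ B') := by
    intro B hB B' hB' hne
    have hne1 := card_add_card_inter_ne_of_mem_link havoid hB hB' hne
    have hlt3 := card_inter_lt_of_ne hne ((hcard B hB).trans (hcard B' hB').symm)
    rw [hcard B hB] at hlt3
    rw [Nat.even_iff]
    omega
  refine ⟨hcard, heven, ?_⟩
  calc #(link F A) ≤ #Aᶜ :=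
        card_le_card_of_oddtown (fun _ => subset_compl_of_mem_link)
          (fun B hB => by rw [hcard B hB]; decide) heven
    _ ≤ n - k + 3 := by rw [card_compl, Fintype.card_fin, hA]; omega
end

section
/- Let A1,...,A_{n+1} be odd-sized subsets of [n] such that the only pairs with odd-sized intersection are {A1,A2} and {A1,A3}. Then the characteristic vectors v_2,...,v_{n+1} are linearly independent in F_2^n, and moreover this configuration is impossible (leads to v1+v2+v3 = 0, contradicting odd set sizes). -/
/-!
Over `𝔽₂` the dot product of two characteristic vectors is the parity of the intersection, so
`v₂, …, v_{n+1}` are orthonormal and `u = v₁ + v₂ + v₃` satisfies `u ⬝ v₁ = 1 + 1 + 1 = 1`,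
`u ⬝ v₂ = 1 + 1 + 0 = 0`, `u ⬝ v₃ = 1 + 0 + 1 = 0` and `u ⬝ vⱼ = 0` for `j > 3`, hence also
`u ⬝ u = 1`. Thus `u, v₂, …, v_{n+1}` are the rows of an `(n+1) × n` matrix `W` with `W Wᵀ = 1`,
which is impossible since `n + 1 = rank (W Wᵀ) ≤ rank W ≤ n`.
-/

open Finset Matrix

theorem card_le_card_of_mul_eq_one {m n R : Type*} [Fintype m] [Fintype n] [DecidableEq m]
    [CommSemiring R] [StrongRankCondition R] {A : Matrix m n R} {B : Matrix n m R}
    (h : A * B = 1) : Fintype.card m ≤ Fintype.card n :=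
  calc Fintype.card m = (A * B).rank := by rw [h, rank_one]
    _ ≤ A.rank := rank_mul_le_left A B
    _ ≤ Fintype.card n := rank_le_card_width A

theorem boole_mem_dotProduct_boole_mem {α R : Type*} [Fintype α] [DecidableEq α]
    [NonAssocSemiring R] (s t : Finset α) :
    (fun x => if x ∈ s then (1 : R) else 0) ⬝ᵥ (fun x => if x ∈ t then 1 else 0) = #(s ∩ t) := by
  simp [dotProduct, inter_comm]

theorem update_mul_transpose_update_eq_one {ι m R : Type*} [Fintype m] [DecidableEq ι]
    [CommSemiring R] {v : ι → m → R} {a : ι} {u : m → R}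
    (hu : ∀ j, u ⬝ᵥ v j = if j = a then 1 else 0) (huu : u ⬝ᵥ u = 1)
    (hv : ∀ i ≠ a, ∀ j ≠ a, v i ⬝ᵥ v j = if i = j then 1 else 0) :
    of (Function.update v a u) * (of (Function.update v a u))ᵀ = 1 := by
  ext i j
  rw [mul_apply', one_apply]
  change Function.update v a u i ⬝ᵥ Function.update v a u j = _
  rcases eq_or_ne i a with rfl | hi
  · rcases eq_or_ne j i with rfl | hj
    · simp [huu]
    · simp [hu, hj, hj.symm]
  · rcases eq_or_ne j a with rfl | hj
    · simp [dotProduct_comm, hu, hi]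
    · simp [hi, hj, hv i hi j hj]

theorem update_add_add_mul_transpose_eq_one {ι m : Type*} [Fintype m] [DecidableEq ι]
    {v : ι → m → ZMod 2} {a b c : ι} (hab : a ≠ b) (hac : a ≠ c) (hbc : b ≠ c)
    (hself : ∀ i, v i ⬝ᵥ v i = 1) (hvab : v a ⬝ᵥ v b = 1) (hvac : v a ⬝ᵥ v c = 1)
    (hzero : ∀ i j, i ≠ j → ({i, j} : Finset ι) ≠ {a, b} → ({i, j} : Finset ι) ≠ {a, c} →
      v i ⬝ᵥ v j = 0) :
    of (Function.update v a (v a + v b + v c)) *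
      (of (Function.update v a (v a + v b + v c)))ᵀ = 1 := by
  have hv : ∀ i ≠ a, ∀ j ≠ a, v i ⬝ᵥ v j = if i = j then 1 else 0 := by
    intro i hi j hj
    split_ifs with hij
    · rw [hij, hself]
    · have ha : a ∉ ({i, j} : Finset ι) := by simp [hi.symm, hj.symm]
      exact hzero i j hij (ne_of_mem_of_not_mem' (by simp) ha).symm
        (ne_of_mem_of_not_mem' (by simp) ha).symm
  have hu : ∀ j, (v a + v b + v c) ⬝ᵥ v j = if j = a then 1 else 0 := by
    intro j
    simp only [add_dotProduct]
    rcases eq_or_ne j a with rfl | hja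
    · rw [hself, dotProduct_comm, hvab, dotProduct_comm, hvac, if_pos rfl]; decide
    rw [if_neg hja, hv b hab.symm j hja, hv c hac.symm j hja]
    rcases eq_or_ne j b with rfl | hjb
    · rw [hvab, if_pos rfl, if_neg hbc.symm]; decide
    rcases eq_or_ne j c with rfl | hjc
    · rw [hvac, if_neg hbc, if_pos rfl]; decide
    have hb : b ∉ ({a, j} : Finset ι) := by simp [hab.symm, hjb.symm]
    have hc : c ∉ ({a, j} : Finset ι) := by simp [hac.symm, hjc.symm]
    simp [hzero a j hja.symm (ne_of_mem_of_not_mem' (by simp) hb).symm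
      (ne_of_mem_of_not_mem' (by simp) hc).symm, hjb.symm, hjc.symm]
  refine update_mul_transpose_update_eq_one hu ?_ hv
  simp [dotProduct_add, dotProduct_comm _ (v a + v b + v c), hu, hab.symm, hac.symm]

/-- Case 2 of Theorem 1.3: if `A₁,…,A_{n+1}` are odd-sized subsets of `[n]`
whose only odd-intersecting pairs are `{A₁,A₂}` and `{A₁,A₃}` (indices `0,1`
and `0,2` here), then `v₂,…,v_{n+1}` are linearly independent over `𝔽₂`, and
moreover the configuration is impossible. -/
theorem case_two_impossible (n : ℕ) (hn : 2 ≤ n)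
    (A : Fin (n + 1) → Finset (Fin n))
    (hodd : ∀ i, Odd (A i).card)
    (h01 : Odd ((A 0 ∩ A 1).card))
    (h02 : Odd ((A 0 ∩ A 2).card))
    (heven : ∀ i j : Fin (n + 1), i ≠ j →
      ({i, j} : Finset (Fin (n + 1))) ≠ {0, 1} →
      ({i, j} : Finset (Fin (n + 1))) ≠ {0, 2} →
      Even ((A i ∩ A j).card)) :
    LinearIndependent (ZMod 2)
      (fun i : Fin n =>
        (fun x : Fin n => if x ∈ A i.succ then (1 : ZMod 2) else 0)) ∧
    False := by
  suffices False from ⟨this.elim, this⟩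
  obtain ⟨m, rfl⟩ := Nat.exists_eq_add_of_le' hn
  have h2 : 2 % (m + 2 + 1) = 2 := Nat.mod_eq_of_lt (by omega)
  have ne01 : (0 : Fin (m + 2 + 1)) ≠ 1 := by simp
  have ne02 : (0 : Fin (m + 2 + 1)) ≠ 2 := by simp [Fin.ext_iff, h2]
  have ne12 : (1 : Fin (m + 2 + 1)) ≠ 2 := by simp [Fin.ext_iff, h2]
  let v : Fin (m + 2 + 1) → Fin (m + 2) → ZMod 2 := fun i x => if x ∈ A i then 1 else 0
  have hdot (i j) : v i ⬝ᵥ v j = #(A i ∩ A j) := boole_mem_dotProduct_boole_mem (A i) (A j)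
  have hW := update_add_add_mul_transpose_eq_one (v := v) ne01 ne02 ne12
    (fun i => by rw [hdot, inter_self]; exact (hodd i).natCast_zmod_two)
    (by rw [hdot]; exact h01.natCast_zmod_two) (by rw [hdot]; exact h02.natCast_zmod_two)
    (fun i j hij hne₁ hne₂ => by rw [hdot]; exact (heven i j hij hne₁ hne₂).natCast_zmod_two)
  simpa using card_le_card_of_mul_eq_one hW
end
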